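/- arXiv:1410.4574 — 5 statements merged into one kernel-verified Lean document; each statement's English description precedes it below -/
import Mathlib

section
/- Equivalence of conditions (1) and (3) of Theorem 1: the six cevian feet A₁, A₂, B₁, B₂, C₁, C₂ are conconic if and only if the six cevian lines AA₁, AA₂, BB₁, BB₂, CC₁, CC₂ touch a common conic (dual formulation). -/
open EuclideanGeometry

abbrev Pt := EuclideanSpace ℝ (Fin 2)

/-- Six (or any set of) points lie on a common conic: a nonzero quadratic equation
vanishes at each of them. -/
def Conconic (s : Set Pt) : Prop :=
  ∃ a b c d e f : ℝ, (a, b, c, d, e, f) ≠ (0, 0, 0, 0, 0, 0) ∧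
    ∀ P ∈ s, a * (P 0) ^ 2 + b * (P 0) * (P 1) + c * (P 1) ^ 2 + d * (P 0) + e * (P 1) + f = 0

/-- `L = (u, v, w)` are homogeneous line coordinates of the line through the
points `P` and `Q`. -/
def IsLineCoord (P Q : Pt) (L : Fin 3 → ℝ) : Prop :=
  (L 0, L 1) ≠ (0, 0) ∧
  L 0 * P 0 + L 1 * P 1 + L 2 = 0 ∧
  L 0 * Q 0 + L 1 * Q 1 + L 2 = 0

/-- A family of lines, each given by a pair of points spanning it, touches a common
conic (dual formulation): a nonzero quadratic form on ℝ³ vanishes at the homogeneous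
line coordinates of each line. -/
def TouchCommonConic (ls : List (Pt × Pt)) : Prop :=
  ∃ Q : QuadraticForm ℝ (Fin 3 → ℝ), Q ≠ 0 ∧
    ∀ pq ∈ ls, ∀ L : Fin 3 → ℝ, IsLineCoord pq.1 pq.2 L → Q L = 0

/-!
In homogeneous coordinates the lifts `Â, B̂, Ĉ` of the vertices form a basis of `ℝ³`, and so do
the line coordinates `B̂ × Ĉ, Ĉ × Â, Â × B̂` of the sides. A foot `(1 - s) B + s C` on `BC` has
coordinates `(0, 1 - s, s)` in the first basis, and the cevian through it has coordinates
`(0, -s, 1 - s)` in the second. Both conditions therefore ask for a nonzero ternary quadratic form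
vanishing at six vectors `(0, ε (1 - s), s)`, `(t, 0, ε (1 - t))`, `(ε (1 - u), u, 0)` with
`ε = ±1`, the cevians using the parameters `1 - s, 1 - t, 1 - u`.

Restricted to a side, such a form is a binary quadratic with two prescribed roots, which ties
together its values at the two vertices of that side. Going around the triangle the three ties
are compatible exactly under Carnot's condition
`s₁ s₂ t₁ t₂ u₁ u₂ = (1 - s₁)(1 - s₂)(1 - t₁)(1 - t₂)(1 - u₁)(1 - u₂)`, unless two feet on a side
coincide, in which case only five points remain and they always lie on a conic. Carnot's condition
is invariant under `s ↦ 1 - s`, which gives the equivalence.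
-/

open Matrix

section Quadric

variable {K V W : Type*} [CommRing K] [AddCommGroup V] [Module K V] [AddCommGroup W] [Module K W]

variable (K) in
def LiesOnQuadric (S : Set V) : Prop :=
  ∃ G : QuadraticForm K V, G ≠ 0 ∧ ∀ v ∈ S, G v = 0

theorem LiesOnQuadric.mono {S T : Set V} (hT : LiesOnQuadric K T) (hST : S ⊆ T) :
    LiesOnQuadric K S :=
  let ⟨G, hG, hGT⟩ := hT
  ⟨G, hG, fun v hv => hGT v (hST hv)⟩

theorem LinearEquiv.liesOnQuadric_image_iff (e : V ≃ₗ[K] W) (S : Set V) :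
    LiesOnQuadric K (e '' S) ↔ LiesOnQuadric K S := by
  constructor
  · rintro ⟨G, hG, hGS⟩
    refine ⟨G.comp e.toLinearMap, fun h => hG ?_, fun v hv => hGS _ ⟨v, hv, rfl⟩⟩
    ext w
    simpa using DFunLike.congr_fun h (e.symm w)
  · rintro ⟨G, hG, hGS⟩
    refine ⟨G.comp e.symm.toLinearMap, fun h => hG ?_, ?_⟩
    · ext v
      simpa using DFunLike.congr_fun h (e v)
    · rintro _ ⟨v, hv, rfl⟩
      simpa using hGS v hv

def quadMonomials (v : Fin 3 → K) : Fin 6 → K :=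
  ![v 0 ^ 2, v 0 * v 1, v 1 ^ 2, v 0 * v 2, v 1 * v 2, v 2 ^ 2]

def ternaryForm (c : Fin 6 → K) : QuadraticForm K (Fin 3 → K) :=
  c 0 • QuadraticMap.proj 0 0 + c 1 • QuadraticMap.proj 0 1 + c 2 • QuadraticMap.proj 1 1 +
    c 3 • QuadraticMap.proj 0 2 + c 4 • QuadraticMap.proj 1 2 + c 5 • QuadraticMap.proj 2 2

theorem quadMonomials_dotProduct (v : Fin 3 → K) (c : Fin 6 → K) :
    quadMonomials v ⬝ᵥ c = c 0 * v 0 ^ 2 + c 1 * (v 0 * v 1) + c 2 * v 1 ^ 2 + c 3 * (v 0 * v 2) +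
      c 4 * (v 1 * v 2) + c 5 * v 2 ^ 2 := by
  rw [dotProduct, Fin.sum_univ_six]
  simp only [quadMonomials, cons_val]
  ring

theorem ternaryForm_apply (c : Fin 6 → K) (v : Fin 3 → K) :
    ternaryForm c v = quadMonomials v ⬝ᵥ c := by
  simp only [ternaryForm, _root_.add_apply, _root_.smul_apply, QuadraticMap.proj_apply, smul_eq_mul,
    quadMonomials_dotProduct]
  ring

theorem ternaryForm_eq_zero_iff (c : Fin 6 → K) : ternaryForm c = 0 ↔ c = 0 := by
  refine ⟨fun h => ?_, fun h => by simp [h, ternaryForm]⟩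
  have hv (v : Fin 3 → K) : quadMonomials v ⬝ᵥ c = 0 := by
    rw [← ternaryForm_apply, h, _root_.zero_apply]
  have h₀ := hv ![1, 0, 0]
  have h₁ := hv ![1, 1, 0]
  have h₂ := hv ![0, 1, 0]
  have h₃ := hv ![1, 0, 1]
  have h₄ := hv ![0, 1, 1]
  have h₅ := hv ![0, 0, 1]
  simp only [quadMonomials_dotProduct, cons_val] at h₀ h₁ h₂ h₃ h₄ h₅
  have h₀' : c 0 = 0 := by linear_combination h₀
  have h₁' : c 1 = 0 := by linear_combination h₁ - h₀ - h₂
  have h₂' : c 2 = 0 := by linear_combination h₂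
  have h₃' : c 3 = 0 := by linear_combination h₃ - h₀ - h₅
  have h₄' : c 4 = 0 := by linear_combination h₄ - h₂ - h₅
  have h₅' : c 5 = 0 := by linear_combination h₅
  funext i
  fin_cases i <;> assumption

theorem exists_eq_ternaryForm (G : QuadraticForm K (Fin 3 → K)) : ∃ c, G = ternaryForm c := by
  set e : Fin 3 → Fin 3 → K := fun i => Pi.single i 1
  refine ⟨![G (e 0), QuadraticMap.polar G (e 0) (e 1), G (e 1), QuadraticMap.polar G (e 0) (e 2),
    QuadraticMap.polar G (e 1) (e 2), G (e 2)], ?_⟩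
  ext v
  have hv : v = v 0 • e 0 + v 1 • e 1 + v 2 • e 2 := by
    funext i
    fin_cases i <;> simp [e]
  rw [ternaryForm_apply]
  conv_lhs => rw [hv]
  simp only [QuadraticMap.map_add G, QuadraticMap.map_smul, QuadraticMap.polar_add_left,
    QuadraticMap.polar_smul_left, QuadraticMap.polar_smul_right, quadMonomials_dotProduct, cons_val,
    smul_eq_mul]
  ring

theorem liesOnQuadric_iff_exists_dotProduct (S : Set (Fin 3 → K)) :
    LiesOnQuadric K S ↔ ∃ c ≠ 0, ∀ v ∈ S, quadMonomials v ⬝ᵥ c = 0 := by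
  constructor
  · rintro ⟨G, hG, hGS⟩
    obtain ⟨c, rfl⟩ := exists_eq_ternaryForm G
    exact ⟨c, fun hc => hG ((ternaryForm_eq_zero_iff c).2 hc), fun v hv => by
      rw [← ternaryForm_apply]
      exact hGS v hv⟩
  · rintro ⟨c, hc, hcS⟩
    exact ⟨ternaryForm c, fun h => hc ((ternaryForm_eq_zero_iff c).1 h), fun v hv => by
      rw [ternaryForm_apply]
      exact hcS v hv⟩

end Quadric

theorem liesOnQuadric_range_of_card_lt {K ι : Type*} [Field K] [Fintype ι]
    (w : ι → Fin 3 → K) (hι : Fintype.card ι < 6) : LiesOnQuadric K (Set.range w) := by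
  have hker : LinearMap.ker (of fun i => quadMonomials (w i)).mulVecLin ≠ ⊥ :=
    LinearMap.ker_ne_bot_of_finrank_lt (by simpa using hι)
  obtain ⟨c, hc, hc0⟩ := (Submodule.ne_bot_iff _).1 hker
  refine (liesOnQuadric_iff_exists_dotProduct _).2 ⟨c, hc0, ?_⟩
  rintro _ ⟨i, rfl⟩
  exact congrFun hc i

theorem liesOnQuadric_image_linearCombination_iff {K : Type*} [Field K]
    {v : Fin 3 → Fin 3 → K} (hv : LinearIndependent K v) (S : Set (Fin 3 → K)) :
    LiesOnQuadric K (Fintype.linearCombination K v '' S) ↔ LiesOnQuadric K S := by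
  let b := basisOfLinearIndependentOfCardEqFinrank hv (by simp)
  have hb : ⇑(Fintype.linearCombination K v) = b.equivFun.symm := by
    funext c
    rw [Fintype.linearCombination_apply, b.equivFun_symm_apply,
      coe_basisOfLinearIndependentOfCardEqFinrank]
  rw [hb, LinearEquiv.liesOnQuadric_image_iff]

theorem det_cross_rows {R : Type*} [CommRing R] (u v w : Fin 3 → R) :
    det (of ![v ⨯₃ w, w ⨯₃ u, u ⨯₃ v]) = det (of ![u, v, w]) ^ 2 := by
  rw [det_fin_three, det_fin_three]
  simp only [cross_apply, of_apply, cons_val]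
  ring

theorem LinearIndependent.cross_rows {K : Type*} [Field K] {u v w : Fin 3 → K}
    (h : LinearIndependent K ![u, v, w]) : LinearIndependent K ![v ⨯₃ w, w ⨯₃ u, u ⨯₃ v] := by
  have hdet : IsUnit (det (of ![u, v, w])) :=
    (isUnit_iff_isUnit_det _).1 (linearIndependent_rows_iff_isUnit (A := of ![u, v, w]) |>.1 h)
  refine linearIndependent_rows_iff_isUnit (A := of ![v ⨯₃ w, w ⨯₃ u, u ⨯₃ v]) |>.2
    ((isUnit_iff_isUnit_det _).2 ?_)
  rw [det_cross_rows]
  exact hdet.pow 2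

section Carnot

variable {K : Type*} [Field K]

def sideQuadratic (p q x s : K) : K := p * (1 - s) ^ 2 + q * s ^ 2 + x * (s * (1 - s))

def CarnotCondition (s₁ s₂ t₁ t₂ u₁ u₂ : K) : Prop :=
  s₁ = s₂ ∨ t₁ = t₂ ∨ u₁ = u₂ ∨
    s₁ * s₂ * (t₁ * t₂) * (u₁ * u₂) =
      (1 - s₁) * (1 - s₂) * ((1 - t₁) * (1 - t₂)) * ((1 - u₁) * (1 - u₂))

theorem carnotCondition_one_sub (s₁ s₂ t₁ t₂ u₁ u₂ : K) :
    CarnotCondition (1 - s₁) (1 - s₂) (1 - t₁) (1 - t₂) (1 - u₁) (1 - u₂) ↔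
      CarnotCondition s₁ s₂ t₁ t₂ u₁ u₂ := by
  simp only [CarnotCondition, sub_right_inj, sub_sub_cancel,
    eq_comm (b := s₁ * s₂ * (t₁ * t₂) * (u₁ * u₂))]

theorem mul_eq_mul_of_sideQuadratic_eq_zero {p q x s₁ s₂ : K} (hs : s₁ ≠ s₂)
    (h₁ : sideQuadratic p q x s₁ = 0) (h₂ : sideQuadratic p q x s₂ = 0) :
    q * (s₁ * s₂) = p * ((1 - s₁) * (1 - s₂)) := by
  have h : (s₁ - s₂) * (q * (s₁ * s₂) - p * ((1 - s₁) * (1 - s₂))) = 0 := by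
    unfold sideQuadratic at h₁ h₂
    linear_combination (s₂ * (1 - s₂)) * h₁ - (s₁ * (1 - s₁)) * h₂
  exact sub_eq_zero.1 ((mul_eq_zero.1 h).resolve_left (sub_ne_zero.2 hs))

theorem eq_zero_of_sideQuadratic_zero_zero {x s : K} (hs : s * (1 - s) ≠ 0)
    (h : sideQuadratic 0 0 x s = 0) : x = 0 := by
  simpa [sideQuadratic, hs] using h

theorem carnotCondition_of_sideQuadratic_eq_zero {p q r x y z s₁ s₂ t₁ t₂ u₁ u₂ : K}
    (hs : s₁ * (1 - s₁) ≠ 0) (ht : t₁ * (1 - t₁) ≠ 0) (hu : u₁ * (1 - u₁) ≠ 0)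
    (hne : ¬(p = 0 ∧ q = 0 ∧ r = 0 ∧ x = 0 ∧ y = 0 ∧ z = 0))
    (ha₁ : sideQuadratic q r x s₁ = 0) (ha₂ : sideQuadratic q r x s₂ = 0)
    (hb₁ : sideQuadratic r p y t₁ = 0) (hb₂ : sideQuadratic r p y t₂ = 0)
    (hc₁ : sideQuadratic p q z u₁ = 0) (hc₂ : sideQuadratic p q z u₂ = 0) :
    CarnotCondition s₁ s₂ t₁ t₂ u₁ u₂ := by
  by_contra hcarnot
  simp only [CarnotCondition, not_or] at hcarnot
  obtain ⟨hs', ht', hu', hprod⟩ := hcarnot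
  have hA := mul_eq_mul_of_sideQuadratic_eq_zero hs' ha₁ ha₂
  have hB := mul_eq_mul_of_sideQuadratic_eq_zero ht' hb₁ hb₂
  have hC := mul_eq_mul_of_sideQuadratic_eq_zero hu' hc₁ hc₂
  set d := s₁ * s₂ * (t₁ * t₂) * (u₁ * u₂) -
    (1 - s₁) * (1 - s₂) * ((1 - t₁) * (1 - t₂)) * ((1 - u₁) * (1 - u₂))
  have hd : d ≠ 0 := sub_ne_zero.2 hprod
  -- chaining the three side relations around the triangle from any vertex gives `value * d = 0`
  have hp : p = 0 := (mul_eq_zero.1 (show p * d = 0 by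
    linear_combination (s₁ * s₂ * (u₁ * u₂)) * hB + ((1 - t₁) * (1 - t₂) * (u₁ * u₂)) * hA +
      ((1 - s₁) * (1 - s₂) * ((1 - t₁) * (1 - t₂))) * hC)).resolve_right hd
  have hq : q = 0 := (mul_eq_zero.1 (show q * d = 0 by
    linear_combination (s₁ * s₂ * (t₁ * t₂)) * hC + ((1 - u₁) * (1 - u₂) * (s₁ * s₂)) * hB +
      ((1 - t₁) * (1 - t₂) * ((1 - u₁) * (1 - u₂))) * hA)).resolve_right hd
  have hr : r = 0 := (mul_eq_zero.1 (show r * d = 0 by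
    linear_combination (t₁ * t₂ * (u₁ * u₂)) * hA + ((1 - s₁) * (1 - s₂) * (t₁ * t₂)) * hC +
      ((1 - s₁) * (1 - s₂) * ((1 - u₁) * (1 - u₂))) * hB)).resolve_right hd
  subst hp hq hr
  exact hne ⟨rfl, rfl, rfl, eq_zero_of_sideQuadratic_zero_zero hs ha₁,
    eq_zero_of_sideQuadratic_zero_zero ht hb₁, eq_zero_of_sideQuadratic_zero_zero hu hc₁⟩

def sidePoints (ε s₁ s₂ t₁ t₂ u₁ u₂ : K) : Set (Fin 3 → K) :=
  {![0, ε * (1 - s₁), s₁], ![0, ε * (1 - s₂), s₂], ![t₁, 0, ε * (1 - t₁)], ![t₂, 0, ε * (1 - t₂)],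
    ![ε * (1 - u₁), u₁, 0], ![ε * (1 - u₂), u₂, 0]}

theorem quadMonomials_dotProduct_sideA {ε : K} (hε : ε ^ 2 = 1) (c : Fin 6 → K) (s : K) :
    quadMonomials ![0, ε * (1 - s), s] ⬝ᵥ c = sideQuadratic (c 2) (c 5) (ε * c 4) s := by
  simp only [quadMonomials_dotProduct, cons_val, sideQuadratic]
  linear_combination (c 2 * (1 - s) ^ 2) * hε

theorem quadMonomials_dotProduct_sideB {ε : K} (hε : ε ^ 2 = 1) (c : Fin 6 → K) (t : K) :
    quadMonomials ![t, 0, ε * (1 - t)] ⬝ᵥ c = sideQuadratic (c 5) (c 0) (ε * c 3) t := by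
  simp only [quadMonomials_dotProduct, cons_val, sideQuadratic]
  linear_combination (c 5 * (1 - t) ^ 2) * hε

theorem quadMonomials_dotProduct_sideC {ε : K} (hε : ε ^ 2 = 1) (c : Fin 6 → K) (u : K) :
    quadMonomials ![ε * (1 - u), u, 0] ⬝ᵥ c = sideQuadratic (c 0) (c 2) (ε * c 1) u := by
  simp only [quadMonomials_dotProduct, cons_val, sideQuadratic]
  linear_combination (c 0 * (1 - u) ^ 2) * hε

theorem carnotCondition_of_liesOnQuadric_sidePoints {ε s₁ s₂ t₁ t₂ u₁ u₂ : K} (hε : ε ^ 2 = 1)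
    (hs₁ : s₁ * (1 - s₁) ≠ 0) (ht₁ : t₁ * (1 - t₁) ≠ 0) (hu₁ : u₁ * (1 - u₁) ≠ 0)
    (h : LiesOnQuadric K (sidePoints ε s₁ s₂ t₁ t₂ u₁ u₂)) : CarnotCondition s₁ s₂ t₁ t₂ u₁ u₂ := by
  obtain ⟨c, hc, hcS⟩ := (liesOnQuadric_iff_exists_dotProduct _).1 h
  simp only [sidePoints, Set.mem_insert_iff, Set.mem_singleton_iff, forall_eq_or_imp, forall_eq,
    quadMonomials_dotProduct_sideA hε, quadMonomials_dotProduct_sideB hε,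
    quadMonomials_dotProduct_sideC hε] at hcS
  obtain ⟨ha₁, ha₂, hb₁, hb₂, hc₁, hc₂⟩ := hcS
  refine carnotCondition_of_sideQuadratic_eq_zero hs₁ ht₁ hu₁ ?_ ha₁ ha₂ hb₁ hb₂ hc₁ hc₂
  have hε0 : ε ≠ 0 := by
    rintro rfl
    norm_num at hε
  rintro ⟨h0, h2, h5, h4, h3, h1⟩
  apply hc
  funext i
  fin_cases i
  exacts [h0, (mul_eq_zero.1 h1).resolve_left hε0, h2, (mul_eq_zero.1 h3).resolve_left hε0,
    (mul_eq_zero.1 h4).resolve_left hε0, h5]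

theorem liesOnQuadric_sidePoints_of_mul_eq_mul {ε s₁ s₂ t₁ t₂ u₁ u₂ : K} (hε : ε ^ 2 = 1)
    (hs₁ : s₁ * (1 - s₁) ≠ 0) (hs₂ : s₂ * (1 - s₂) ≠ 0) (ht₁ : t₁ * (1 - t₁) ≠ 0)
    (ht₂ : t₂ * (1 - t₂) ≠ 0) (hu₁ : u₁ * (1 - u₁) ≠ 0) (hu₂ : u₂ * (1 - u₂) ≠ 0)
    (hprod : s₁ * s₂ * (t₁ * t₂) * (u₁ * u₂) =
      (1 - s₁) * (1 - s₂) * ((1 - t₁) * (1 - t₂)) * ((1 - u₁) * (1 - u₂))) :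
    LiesOnQuadric K (sidePoints ε s₁ s₂ t₁ t₂ u₁ u₂) := by
  -- `sideQuadratic (k * (s₁ * s₂)) (k * ((1 - s₁) * (1 - s₂))) (-(k * (s₁ + s₂ - 2 * (s₁ * s₂))))`
  -- vanishes at `s₁` and `s₂` for every `k`; the scalings `kA, kB, kC` of the three sides make the
  -- values at shared vertices agree, the last one by `hprod`
  set kA := t₁ * t₂ * ((1 - u₁) * (1 - u₂))
  set kB := (1 - s₁) * (1 - s₂) * ((1 - u₁) * (1 - u₂))
  set kC := s₁ * s₂ * (t₁ * t₂)
  have hε' (x : K) : ε * (ε * x) = x := by rw [← mul_assoc, ← sq, hε, one_mul]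
  refine (liesOnQuadric_iff_exists_dotProduct _).2
    ⟨![kB * ((1 - t₁) * (1 - t₂)), ε * -(kC * (u₁ + u₂ - 2 * (u₁ * u₂))), kA * (s₁ * s₂),
      ε * -(kB * (t₁ + t₂ - 2 * (t₁ * t₂))), ε * -(kA * (s₁ + s₂ - 2 * (s₁ * s₂))),
      kA * ((1 - s₁) * (1 - s₂))], fun h => ?_, ?_⟩
  · have h2 : kA * (s₁ * s₂) = 0 := congrFun h 2
    exact (mul_ne_zero (mul_ne_zero
      (mul_ne_zero (left_ne_zero_of_mul ht₁) (left_ne_zero_of_mul ht₂))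
      (mul_ne_zero (right_ne_zero_of_mul hu₁) (right_ne_zero_of_mul hu₂)))
      (mul_ne_zero (left_ne_zero_of_mul hs₁) (left_ne_zero_of_mul hs₂))) h2
  · simp only [sidePoints, Set.mem_insert_iff, Set.mem_singleton_iff, forall_eq_or_imp, forall_eq,
      quadMonomials_dotProduct_sideA hε, quadMonomials_dotProduct_sideB hε,
      quadMonomials_dotProduct_sideC hε, cons_val, hε', sideQuadratic]
    exact ⟨by ring, by ring, by ring, by ring, by linear_combination -(1 - u₁) ^ 2 * hprod,
      by linear_combination -(1 - u₂) ^ 2 * hprod⟩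

theorem liesOnQuadric_sidePoints_iff {ε s₁ s₂ t₁ t₂ u₁ u₂ : K} (hε : ε ^ 2 = 1)
    (hs₁ : s₁ * (1 - s₁) ≠ 0) (hs₂ : s₂ * (1 - s₂) ≠ 0) (ht₁ : t₁ * (1 - t₁) ≠ 0)
    (ht₂ : t₂ * (1 - t₂) ≠ 0) (hu₁ : u₁ * (1 - u₁) ≠ 0) (hu₂ : u₂ * (1 - u₂) ≠ 0) :
    LiesOnQuadric K (sidePoints ε s₁ s₂ t₁ t₂ u₁ u₂) ↔ CarnotCondition s₁ s₂ t₁ t₂ u₁ u₂ := by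
  refine ⟨carnotCondition_of_liesOnQuadric_sidePoints hε hs₁ ht₁ hu₁, ?_⟩
  rintro (rfl | rfl | rfl | hprod)
  · refine (liesOnQuadric_range_of_card_lt ![![0, ε * (1 - s₁), s₁], ![t₁, 0, ε * (1 - t₁)],
      ![t₂, 0, ε * (1 - t₂)], ![ε * (1 - u₁), u₁, 0], ![ε * (1 - u₂), u₂, 0]] (by simp)).mono ?_
    simp [sidePoints, Set.insert_subset_iff, range_cons]
  · refine (liesOnQuadric_range_of_card_lt ![![0, ε * (1 - s₁), s₁], ![0, ε * (1 - s₂), s₂],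
      ![t₁, 0, ε * (1 - t₁)], ![ε * (1 - u₁), u₁, 0], ![ε * (1 - u₂), u₂, 0]] (by simp)).mono ?_
    simp [sidePoints, Set.insert_subset_iff, range_cons]
  · refine (liesOnQuadric_range_of_card_lt ![![0, ε * (1 - s₁), s₁], ![0, ε * (1 - s₂), s₂],
      ![t₁, 0, ε * (1 - t₁)], ![t₂, 0, ε * (1 - t₂)], ![ε * (1 - u₁), u₁, 0]] (by simp)).mono ?_
    simp [sidePoints, Set.insert_subset_iff, range_cons]
  · exact liesOnQuadric_sidePoints_of_mul_eq_mul hε hs₁ hs₂ ht₁ ht₂ hu₁ hu₂ hprod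

theorem liesOnQuadric_sidePoints_one_sub_iff {ε s₁ s₂ t₁ t₂ u₁ u₂ : K} (hε : ε ^ 2 = 1)
    (hs₁ : s₁ * (1 - s₁) ≠ 0) (hs₂ : s₂ * (1 - s₂) ≠ 0) (ht₁ : t₁ * (1 - t₁) ≠ 0)
    (ht₂ : t₂ * (1 - t₂) ≠ 0) (hu₁ : u₁ * (1 - u₁) ≠ 0) (hu₂ : u₂ * (1 - u₂) ≠ 0) :
    LiesOnQuadric K (sidePoints ε (1 - s₁) (1 - s₂) (1 - t₁) (1 - t₂) (1 - u₁) (1 - u₂)) ↔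
      CarnotCondition s₁ s₂ t₁ t₂ u₁ u₂ := by
  have h (r : K) (hr : r * (1 - r) ≠ 0) : (1 - r) * (1 - (1 - r)) ≠ 0 := by
    rwa [sub_sub_cancel, mul_comm]
  rw [liesOnQuadric_sidePoints_iff hε (h _ hs₁) (h _ hs₂) (h _ ht₁) (h _ ht₂) (h _ hu₁) (h _ hu₂),
    carnotCondition_one_sub]

end Carnot

section Plane

open AffineMap

def homCoord (P : Pt) : Fin 3 → ℝ := ![P 0, P 1, 1]

theorem homCoord_lineMap (P Q : Pt) (r : ℝ) :
    homCoord (lineMap P Q r) = (1 - r) • homCoord P + r • homCoord Q := by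
  funext i
  fin_cases i <;> simp [homCoord, lineMap_apply_module]

theorem dotProduct_homCoord (L : Fin 3 → ℝ) (P : Pt) :
    L ⬝ᵥ homCoord P = L 0 * P 0 + L 1 * P 1 + L 2 := by
  simp [homCoord, dotProduct, Fin.sum_univ_three]

theorem linearIndependent_homCoord {ι : Type*} {p : ι → Pt} (h : AffineIndependent ℝ p) :
    LinearIndependent ℝ (homCoord ∘ p) := by
  rw [linearIndependent_iff']
  intro s g hg i hi
  have hcoord (j : Fin 3) : ∑ i ∈ s, g i * homCoord (p i) j = 0 := by
    simpa using congrFun hg j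
  refine h.eq_zero_of_sum_eq_zero (by simpa [homCoord] using hcoord 2) ?_ i hi
  ext j
  fin_cases j
  · simpa [homCoord] using hcoord 0
  · simpa [homCoord] using hcoord 1

theorem conconic_iff_liesOnQuadric (s : Set Pt) :
    Conconic s ↔ LiesOnQuadric ℝ (homCoord '' s) := by
  simp only [Conconic, liesOnQuadric_iff_exists_dotProduct, Set.forall_mem_image]
  constructor
  · rintro ⟨a, b, c, d, e, f, hne, h⟩
    refine ⟨![a, b, c, d, e, f], fun h0 => hne ?_, fun P hP => ?_⟩
    · simp only [Prod.mk.injEq]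
      exact ⟨congrFun h0 0, congrFun h0 1, congrFun h0 2, congrFun h0 3, congrFun h0 4,
        congrFun h0 5⟩
    · simp only [quadMonomials_dotProduct, homCoord, cons_val]
      linear_combination h P hP
  · rintro ⟨c, hc, h⟩
    refine ⟨c 0, c 1, c 2, c 3, c 4, c 5, fun h0 => hc ?_, fun P hP => ?_⟩
    · simp only [Prod.mk.injEq] at h0
      funext i
      fin_cases i <;> simp [h0]
    · have hP' := h hP
      simp only [quadMonomials_dotProduct, homCoord, cons_val] at hP'
      linear_combination hP'

theorem isLineCoord_cross {P Q : Pt} (h : P ≠ Q) :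
    IsLineCoord P Q (homCoord P ⨯₃ homCoord Q) := by
  refine ⟨fun h01 => h ?_, ?_, ?_⟩
  · simp only [homCoord, cross_apply, cons_val, mul_one, one_mul, Prod.mk.injEq] at h01
    ext i
    fin_cases i
    · show P 0 = Q 0
      linarith [h01.2]
    · show P 1 = Q 1
      linarith [h01.1]
  · rw [← dotProduct_homCoord, dotProduct_comm, dot_self_cross]
  · rw [← dotProduct_homCoord, dotProduct_comm, dot_cross_self]

theorem IsLineCoord.exists_eq_smul_cross {P Q : Pt} {L : Fin 3 → ℝ} (hL : IsLineCoord P Q L)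
    (h : P ≠ Q) : ∃ a : ℝ, L = a • (homCoord P ⨯₃ homCoord Q) := by
  have hL0 : L ≠ 0 := fun h0 => hL.1 (by simp [h0])
  have hw0 : homCoord P ⨯₃ homCoord Q ≠ 0 := fun h0 => (isLineCoord_cross h).1 (by simp [h0])
  have hcross : L ⨯₃ (homCoord P ⨯₃ homCoord Q) = 0 := by
    rw [cross_cross_eq_smul_sub_smul', dotProduct_comm (homCoord P), dotProduct_homCoord,
      dotProduct_homCoord, hL.2.1, hL.2.2, zero_smul, zero_smul, sub_zero]
  obtain ⟨a, ha⟩ := (Projectivization.mk_eq_mk_iff' ℝ _ _ hL0 hw0).1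
    ((Projectivization.mk_eq_mk_iff_crossProduct_eq_zero hL0 hw0).2 hcross)
  exact ⟨a, ha.symm⟩

theorem forall_isLineCoord_iff (G : QuadraticForm ℝ (Fin 3 → ℝ)) {P Q : Pt} (h : P ≠ Q) :
    (∀ L, IsLineCoord P Q L → G L = 0) ↔ G (homCoord P ⨯₃ homCoord Q) = 0 := by
  refine ⟨fun hG => hG _ (isLineCoord_cross h), fun hG L hL => ?_⟩
  obtain ⟨a, rfl⟩ := hL.exists_eq_smul_cross h
  rw [QuadraticMap.map_smul, hG, smul_zero]

theorem touchCommonConic_iff_liesOnQuadric {ls : List (Pt × Pt)} (h : ∀ pq ∈ ls, pq.1 ≠ pq.2) :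
    TouchCommonConic ls ↔
      LiesOnQuadric ℝ ((fun pq => homCoord pq.1 ⨯₃ homCoord pq.2) '' {pq | pq ∈ ls}) := by
  simp only [TouchCommonConic, LiesOnQuadric, Set.forall_mem_image, Set.mem_ofPred_eq]
  exact exists_congr fun G => and_congr_right fun _ =>
    forall₂_congr fun pq hpq => forall_isLineCoord_iff G (h pq hpq)

theorem exists_lineMap_eq_of_mem_affineSpan_pair {k V P : Type*} [Ring k] [NoZeroDivisors k]
    [AddCommGroup V] [Module k V] [AddTorsor V P] {p p₀ p₁ : P} (h : p ∈ line[k, p₀, p₁])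
    (h₀ : p ≠ p₀) (h₁ : p ≠ p₁) : ∃ r : k, r * (1 - r) ≠ 0 ∧ lineMap p₀ p₁ r = p := by
  obtain ⟨r, rfl⟩ := mem_affineSpan_pair_iff_exists_lineMap_eq.1 h
  refine ⟨r, fun hr => ?_, rfl⟩
  rcases mul_eq_zero.1 hr with rfl | hr
  · exact h₀ (lineMap_apply_zero p₀ p₁)
  · rw [sub_eq_zero] at hr
    subst hr
    exact h₁ (lineMap_apply_one p₀ p₁)

theorem homCoord_image_lineMap (A B C : Pt) (s₁ s₂ t₁ t₂ u₁ u₂ : ℝ) :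
    homCoord '' {lineMap B C s₁, lineMap B C s₂, lineMap C A t₁, lineMap C A t₂, lineMap A B u₁,
      lineMap A B u₂} =
      Fintype.linearCombination ℝ ![homCoord A, homCoord B, homCoord C] ''
        sidePoints 1 s₁ s₂ t₁ t₂ u₁ u₂ := by
  simp only [sidePoints, Set.image_insert_eq, Set.image_singleton, homCoord_lineMap,
    Fintype.linearCombination_apply, Fin.sum_univ_three, cons_val, one_mul, zero_smul, zero_add,
    add_zero]
  rw [add_comm (t₁ • _), add_comm (t₂ • _)]

theorem cross_image_cevians (A B C : Pt) (s₁ s₂ t₁ t₂ u₁ u₂ : ℝ) :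
    (fun pq : Pt × Pt => homCoord pq.1 ⨯₃ homCoord pq.2) ''
      {pq | pq ∈ [(A, lineMap B C s₁), (A, lineMap B C s₂), (B, lineMap C A t₁),
        (B, lineMap C A t₂), (C, lineMap A B u₁), (C, lineMap A B u₂)]} =
      Fintype.linearCombination ℝ
        ![homCoord B ⨯₃ homCoord C, homCoord C ⨯₃ homCoord A, homCoord A ⨯₃ homCoord B] ''
        sidePoints (-1) (1 - s₁) (1 - s₂) (1 - t₁) (1 - t₂) (1 - u₁) (1 - u₂) := by
  have hlist : {pq | pq ∈ [(A, lineMap B C s₁), (A, lineMap B C s₂), (B, lineMap C A t₁),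
      (B, lineMap C A t₂), (C, lineMap A B u₁), (C, lineMap A B u₂)]} =
      ({(A, lineMap B C s₁), (A, lineMap B C s₂), (B, lineMap C A t₁), (B, lineMap C A t₂),
        (C, lineMap A B u₁), (C, lineMap A B u₂)} : Set (Pt × Pt)) := by
    ext
    simp
  rw [hlist]
  simp only [sidePoints, Set.image_insert_eq, Set.image_singleton, homCoord_lineMap,
    Fintype.linearCombination_apply, Fin.sum_univ_three, cons_val, map_add, map_smul,
    sub_sub_cancel, neg_one_mul, zero_smul, zero_add, add_zero]
  rw [← cross_anticomm (homCoord C) (homCoord A), ← cross_anticomm (homCoord A) (homCoord B),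
    ← cross_anticomm (homCoord B) (homCoord C)]
  simp only [smul_neg, neg_smul]
  rw [add_comm (-(s₁ • _)), add_comm (-(s₂ • _)), add_comm (-(u₁ • _)), add_comm (-(u₂ • _))]

end Plane

open AffineMap in
/-- Theorem 1, (1) ⇔ (3): the six cevian feet are conconic iff the six cevian lines
touch a common conic. -/
theorem cevian_feet_conconic_iff_touch_common_conic
    (A B C A₁ A₂ B₁ B₂ C₁ C₂ : Pt)
    (hABC : AffineIndependent ℝ ![A, B, C])
    (hA₁ : A₁ ∈ line[ℝ, B, C]) (hA₂ : A₂ ∈ line[ℝ, B, C])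
    (hB₁ : B₁ ∈ line[ℝ, C, A]) (hB₂ : B₂ ∈ line[ℝ, C, A])
    (hC₁ : C₁ ∈ line[ℝ, A, B]) (hC₂ : C₂ ∈ line[ℝ, A, B])
    (hne : ∀ P ∈ ({A₁, A₂, B₁, B₂, C₁, C₂} : Set Pt), P ≠ A ∧ P ≠ B ∧ P ≠ C) :
    Conconic {A₁, A₂, B₁, B₂, C₁, C₂} ↔
      TouchCommonConic [(A, A₁), (A, A₂), (B, B₁), (B, B₂), (C, C₁), (C, C₂)] := by
  simp only [Set.mem_insert_iff, Set.mem_singleton_iff, forall_eq_or_imp, forall_eq] at hne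
  obtain ⟨⟨hA₁A, hA₁B, hA₁C⟩, ⟨hA₂A, hA₂B, hA₂C⟩, ⟨hB₁A, hB₁B, hB₁C⟩, ⟨hB₂A, hB₂B, hB₂C⟩,
    ⟨hC₁A, hC₁B, hC₁C⟩, ⟨hC₂A, hC₂B, hC₂C⟩⟩ := hne
  obtain ⟨s₁, hs₁, rfl⟩ := exists_lineMap_eq_of_mem_affineSpan_pair hA₁ hA₁B hA₁C
  obtain ⟨s₂, hs₂, rfl⟩ := exists_lineMap_eq_of_mem_affineSpan_pair hA₂ hA₂B hA₂C
  obtain ⟨t₁, ht₁, rfl⟩ := exists_lineMap_eq_of_mem_affineSpan_pair hB₁ hB₁C hB₁A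
  obtain ⟨t₂, ht₂, rfl⟩ := exists_lineMap_eq_of_mem_affineSpan_pair hB₂ hB₂C hB₂A
  obtain ⟨u₁, hu₁, rfl⟩ := exists_lineMap_eq_of_mem_affineSpan_pair hC₁ hC₁A hC₁B
  obtain ⟨u₂, hu₂, rfl⟩ := exists_lineMap_eq_of_mem_affineSpan_pair hC₂ hC₂A hC₂B
  have hv : LinearIndependent ℝ ![homCoord A, homCoord B, homCoord C] := by
    convert linearIndependent_homCoord hABC using 1
    funext i
    fin_cases i <;> rfl
  have hcevians : ∀ pq ∈ [(A, lineMap B C s₁), (A, lineMap B C s₂), (B, lineMap C A t₁),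
      (B, lineMap C A t₂), (C, lineMap A B u₁), (C, lineMap A B u₂)], pq.1 ≠ pq.2 := by
    simpa using ⟨hA₁A.symm, hA₂A.symm, hB₁B.symm, hB₂B.symm, hC₁C.symm, hC₂C.symm⟩
  rw [conconic_iff_liesOnQuadric, homCoord_image_lineMap,
    liesOnQuadric_image_linearCombination_iff hv,
    liesOnQuadric_sidePoints_iff (one_pow 2) hs₁ hs₂ ht₁ ht₂ hu₁ hu₂,
    touchCommonConic_iff_liesOnQuadric hcevians, cross_image_cevians,
    liesOnQuadric_image_linearCombination_iff hv.cross_rows,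
    liesOnQuadric_sidePoints_one_sub_iff (by norm_num) hs₁ hs₂ ht₁ ht₂ hu₁ hu₂]
end

section
/- Theorem 2 (isogonal cevians): if AA₁, AA₂ and BB₁, BB₂ and CC₁, CC₂ are three pairs of isogonally conjugate cevians of triangle ABC — that is, ∠BAA₁ = ∠CAA₂, ∠CBB₁ = ∠ABB₂, and ∠ACC₁ = ∠BCC₂ (unoriented angles) — then the six cevian feet A₁, A₂, B₁, B₂, C₁, C₂ are conconic. -/
/-!
At the vertex `A`, write the feet as `A₁ = lineMap B C t₁` and `A₂ = lineMap B C t₂`. The equal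
angles `∠ B A A₁ = ∠ C A A₂` have equal cotangents, i.e. equal ratios of inner product to
`sin · ‖·‖ · ‖·‖`; the latter is `t₁` resp. `1 - t₂` times the same Gram quantity of the triangle,
which gives Steiner's relation `t₁ t₂ AC² = (1 - t₁) (1 - t₂) AB²`. Multiplying the three vertex
relations, the side lengths cancel and Carnot's condition `∏ t = ∏ (1 - t)` over the six ratios
remains. Carnot's condition in turn produces the conic: in barycentric coordinates take the
quadratic form whose restriction to each side line is a multiple of `(t - t₁) (t - t₂)`; the three
multiples can be matched at the vertices exactly when Carnot's condition holds.
-/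

open EuclideanGeometry

namespace InnerProductGeometry
variable {V : Type*} [NormedAddCommGroup V] [InnerProductSpace ℝ V]
open Real AffineMap
open scoped RealInnerProductSpace

theorem inner_mul_sin_angle_eq_of_angle_eq {x y x' y' : V} (h : angle x y = angle x' y') :
    ⟪x, y⟫ * (sin (angle x' y') * (‖x'‖ * ‖y'‖)) = ⟪x', y'⟫ * (sin (angle x y) * (‖x‖ * ‖y‖)) := by
  rw [← cos_angle_mul_norm_mul_norm x y, ← cos_angle_mul_norm_mul_norm x' y', h]
  ring

theorem sin_angle_lineMap_mul_norm_mul_norm (u w : V) (t : ℝ) :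
    sin (angle u (lineMap u w t)) * (‖u‖ * ‖lineMap u w t‖) =
      |t| * (sin (angle u w) * (‖u‖ * ‖w‖)) := by
  have hgram : ⟪u, u⟫ * ⟪lineMap u w t, lineMap u w t⟫ - ⟪u, lineMap u w t⟫ * ⟪u, lineMap u w t⟫
      = t ^ 2 * (⟪u, u⟫ * ⟪w, w⟫ - ⟪u, w⟫ * ⟪u, w⟫) := by
    simp only [lineMap_apply_module, inner_add_left, inner_add_right, inner_smul_left,
      inner_smul_right, real_inner_comm u w, conj_trivial]
    ring
  rw [sin_angle_mul_norm_mul_norm, sin_angle_mul_norm_mul_norm, hgram,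
    sqrt_mul (sq_nonneg t), sqrt_sq_eq_abs]

theorem mul_mul_norm_sq_eq_of_angle_lineMap_eq {u w : V} {t₁ t₂ : ℝ}
    (hS : sin (angle u w) * (‖u‖ * ‖w‖) ≠ 0) (ht₁ : 0 ≤ t₁) (ht₂ : t₂ ≤ 1)
    (h : angle u (lineMap u w t₁) = angle w (lineMap u w t₂)) :
    t₁ * t₂ * ‖w‖ ^ 2 = (1 - t₁) * (1 - t₂) * ‖u‖ ^ 2 := by
  have hsin₂ := sin_angle_lineMap_mul_norm_mul_norm w u (1 - t₂)
  rw [lineMap_apply_one_sub, angle_comm w u, mul_comm ‖w‖ ‖u‖,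
    abs_of_nonneg (by linarith)] at hsin₂
  have hcot := inner_mul_sin_angle_eq_of_angle_eq h
  rw [sin_angle_lineMap_mul_norm_mul_norm, hsin₂, abs_of_nonneg ht₁] at hcot
  have hinner : (1 - t₂) * ⟪u, lineMap u w t₁⟫ = t₁ * ⟪w, lineMap u w t₂⟫ :=
    mul_right_cancel₀ hS (by linear_combination hcot)
  simp only [lineMap_apply_module, inner_add_right, inner_smul_right, real_inner_comm u w,
    real_inner_self_eq_norm_sq] at hinner
  linear_combination -hinner

end InnerProductGeometry

namespace EuclideanGeometry
variable {V P : Type*} [NormedAddCommGroup V] [InnerProductSpace ℝ V] [MetricSpace P]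
  [NormedAddTorsor V P]
open AffineMap

theorem mul_mul_dist_sq_eq_of_angle_lineMap_eq {A B C : P} (h : ¬Collinear ℝ {A, B, C})
    {t₁ t₂ : ℝ} (ht₁ : 0 ≤ t₁) (ht₂ : t₂ ≤ 1)
    (hiso : ∠ B A (lineMap B C t₁) = ∠ C A (lineMap B C t₂)) :
    t₁ * t₂ * dist A C ^ 2 = (1 - t₁) * (1 - t₂) * dist A B ^ 2 := by
  have hBAC : ¬Collinear ℝ {B, A, C} := by rwa [Set.insert_comm]
  have hS : Real.sin (∠ B A C) * (‖B -ᵥ A‖ * ‖C -ᵥ A‖) ≠ 0 :=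
    mul_ne_zero (sin_ne_zero_of_not_collinear hBAC) (mul_ne_zero
      (norm_ne_zero_iff.mpr (vsub_ne_zero.mpr (ne₁₂_of_not_collinear hBAC)))
      (norm_ne_zero_iff.mpr (vsub_ne_zero.mpr (ne₁₃_of_not_collinear h).symm)))
  simp only [EuclideanGeometry.angle, lineMap_vsub] at hiso hS
  rw [dist_eq_norm_vsub' V A C, dist_eq_norm_vsub' V A B]
  exact InnerProductGeometry.mul_mul_norm_sq_eq_of_angle_lineMap_eq hS ht₁ ht₂ hiso

end EuclideanGeometry

open AffineMap

def quadraticFunctions : Submodule ℝ (Pt → ℝ) where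
  carrier := {Q | ∃ a b c d e f : ℝ, ∀ P : Pt,
    Q P = a * (P 0) ^ 2 + b * (P 0) * (P 1) + c * (P 1) ^ 2 + d * (P 0) + e * (P 1) + f}
  zero_mem' := ⟨0, 0, 0, 0, 0, 0, fun P => by simp⟩
  add_mem' := by
    rintro Q Q' ⟨a, b, c, d, e, f, hQ⟩ ⟨a', b', c', d', e', f', hQ'⟩
    exact ⟨a + a', b + b', c + c', d + d', e + e', f + f', fun P => by
      simp only [Pi.add_apply, hQ, hQ']; ring⟩
  smul_mem' := by
    rintro r Q ⟨a, b, c, d, e, f, hQ⟩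
    exact ⟨r * a, r * b, r * c, r * d, r * e, r * f, fun P => by
      simp only [Pi.smul_apply, smul_eq_mul, hQ]; ring⟩

theorem conconic_of_mem_quadraticFunctions {s : Set Pt} {Q : Pt → ℝ}
    (hQ : Q ∈ quadraticFunctions) {X : Pt} (hX : Q X ≠ 0) (hs : ∀ P ∈ s, Q P = 0) :
    Conconic s := by
  obtain ⟨a, b, c, d, e, f, hQ⟩ := hQ
  refine ⟨a, b, c, d, e, f, fun h0 => hX ?_, fun P hP => (hQ P).symm.trans (hs P hP)⟩
  simp only [Prod.mk.injEq] at h0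
  obtain ⟨rfl, rfl, rfl, rfl, rfl, rfl⟩ := h0
  simpa using hQ X

theorem AffineMap.exists_eq_mul_add_mul_add (f : Pt →ᵃ[ℝ] ℝ) :
    ∃ a b c : ℝ, ∀ P : Pt, f P = a * P 0 + b * P 1 + c := by
  refine ⟨f.linear (EuclideanSpace.single 0 1), f.linear (EuclideanSpace.single 1 1), f 0,
    fun P => ?_⟩
  have hP : P = P 0 • EuclideanSpace.single 0 1 + P 1 • EuclideanSpace.single 1 1 := by
    ext i; fin_cases i <;> simp
  conv_lhs => rw [← vsub_vadd P 0, f.map_vadd, hP]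
  simp only [vsub_eq_sub, sub_zero, map_add, map_smul, smul_eq_mul, vadd_eq_add]
  ring

theorem affineMap_mul_mem_quadraticFunctions (f g : Pt →ᵃ[ℝ] ℝ) :
    ⇑f * ⇑g ∈ quadraticFunctions := by
  obtain ⟨a, b, c, hf⟩ := f.exists_eq_mul_add_mul_add
  obtain ⟨a', b', c', hg⟩ := g.exists_eq_mul_add_mul_add
  exact ⟨a * a', a * b' + b * a', b * b', a * c' + c * a', b * c' + c * b', c * c', fun P => by
    simp only [Pi.mul_apply, hf, hg]; ring⟩

theorem conconic_of_carnot {A B C : Pt} (h : AffineIndependent ℝ ![A, B, C])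
    {t₁ t₂ s₁ s₂ z₁ z₂ : ℝ} (h0 : t₁ * t₂ * s₁ * s₂ * z₁ * z₂ ≠ 0)
    (hcarnot : t₁ * t₂ * s₁ * s₂ * z₁ * z₂
      = (1 - t₁) * (1 - t₂) * (1 - s₁) * (1 - s₂) * (1 - z₁) * (1 - z₂)) :
    Conconic {lineMap B C t₁, lineMap B C t₂, lineMap C A s₁, lineMap C A s₂,
      lineMap A B z₁, lineMap A B z₂} := by
  let b : AffineBasis (Fin 3) ℝ Pt :=
    ⟨![A, B, C], h, h.affineSpan_eq_top_iff_card_eq_finrank_add_one.mpr (by simp)⟩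
  have hcoord : ∀ i j, i ≠ j → b.coord i (b j) = 0 := fun i j => b.coord_apply_ne
  obtain ⟨hA₀, hA₁, hA₂⟩ : b.coord 0 A = 1 ∧ b.coord 1 A = 0 ∧ b.coord 2 A = 0 :=
    ⟨b.coord_apply_eq 0, hcoord 1 0 (by decide), hcoord 2 0 (by decide)⟩
  obtain ⟨hB₀, hB₁, hB₂⟩ : b.coord 0 B = 0 ∧ b.coord 1 B = 1 ∧ b.coord 2 B = 0 :=
    ⟨hcoord 0 1 (by decide), b.coord_apply_eq 1, hcoord 2 1 (by decide)⟩
  obtain ⟨hC₀, hC₁, hC₂⟩ : b.coord 0 C = 0 ∧ b.coord 1 C = 0 ∧ b.coord 2 C = 1 :=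
    ⟨hcoord 0 2 (by decide), hcoord 1 2 (by decide), b.coord_apply_eq 2⟩
  -- The coefficient of `(b.coord 0)²` is `lC z₁ z₂` as seen from side `AB` and
  -- `lB (1 - s₁) (1 - s₂)` as seen from side `CA`; the two agree by `hcarnot`.
  let lA := (1 - z₁) * (1 - z₂) * s₁ * s₂
  let lB := (1 - z₁) * (1 - z₂) * (1 - t₁) * (1 - t₂)
  let lC := t₁ * t₂ * s₁ * s₂
  let Q : Pt → ℝ := (t₁ * t₂ * s₁ * s₂ * z₁ * z₂) • (⇑(b.coord 0) * ⇑(b.coord 0))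
    + (lA * t₁ * t₂) • (⇑(b.coord 1) * ⇑(b.coord 1))
    + (lA * (1 - t₁) * (1 - t₂)) • (⇑(b.coord 2) * ⇑(b.coord 2))
    + (lA * (2 * t₁ * t₂ - t₁ - t₂)) • (⇑(b.coord 1) * ⇑(b.coord 2))
    + (lB * (2 * s₁ * s₂ - s₁ - s₂)) • (⇑(b.coord 2) * ⇑(b.coord 0))
    + (lC * (2 * z₁ * z₂ - z₁ - z₂)) • (⇑(b.coord 0) * ⇑(b.coord 1))
  have hQ : Q ∈ quadraticFunctions := by
    apply_rules [Submodule.add_mem, Submodule.smul_mem, affineMap_mul_mem_quadraticFunctions]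
  have hBC (t : ℝ) : Q (lineMap B C t) = lA * (t - t₁) * (t - t₂) := by
    simp only [Q, Pi.add_apply, Pi.smul_apply, Pi.mul_apply, smul_eq_mul, apply_lineMap,
      lineMap_apply_ring', hB₀, hB₁, hB₂, hC₀, hC₁, hC₂]
    ring
  have hCA (s : ℝ) : Q (lineMap C A s) = lB * (s - s₁) * (s - s₂) := by
    simp only [Q, Pi.add_apply, Pi.smul_apply, Pi.mul_apply, smul_eq_mul, apply_lineMap,
      lineMap_apply_ring', hC₀, hC₁, hC₂, hA₀, hA₁, hA₂]
    linear_combination s ^ 2 * hcarnot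
  have hAB (z : ℝ) : Q (lineMap A B z) = lC * (z - z₁) * (z - z₂) := by
    simp only [Q, Pi.add_apply, Pi.smul_apply, Pi.mul_apply, smul_eq_mul, apply_lineMap,
      lineMap_apply_ring', hA₀, hA₁, hA₂, hB₀, hB₁, hB₂]
    ring
  refine conconic_of_mem_quadraticFunctions hQ (X := A) (by simpa [Q, hA₀, hA₁, hA₂] using h0) ?_
  simp only [Set.mem_insert_iff, Set.mem_singleton_iff]
  rintro P (rfl | rfl | rfl | rfl | rfl | rfl) <;> simp [hBC, hCA, hAB]

/-- Theorem 2: the feet of three pairs of isogonally conjugate cevians are conconic. -/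
theorem isogonal_cevian_feet_conconic
    (A B C A₁ A₂ B₁ B₂ C₁ C₂ : Pt)
    (hABC : AffineIndependent ℝ ![A, B, C])
    (hA₁ : Sbtw ℝ B A₁ C) (hA₂ : Sbtw ℝ B A₂ C)
    (hB₁ : Sbtw ℝ C B₁ A) (hB₂ : Sbtw ℝ C B₂ A)
    (hC₁ : Sbtw ℝ A C₁ B) (hC₂ : Sbtw ℝ A C₂ B)
    (hisoA : ∠ B A A₁ = ∠ C A A₂)
    (hisoB : ∠ C B B₁ = ∠ A B B₂)
    (hisoC : ∠ A C C₁ = ∠ B C C₂) :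
    Conconic {A₁, A₂, B₁, B₂, C₁, C₂} := by
  obtain ⟨t₁, ⟨ht₁, -⟩, rfl⟩ := hA₁.mem_image_Ioo
  obtain ⟨t₂, ⟨ht₂, ht₂'⟩, rfl⟩ := hA₂.mem_image_Ioo
  obtain ⟨s₁, ⟨hs₁, -⟩, rfl⟩ := hB₁.mem_image_Ioo
  obtain ⟨s₂, ⟨hs₂, hs₂'⟩, rfl⟩ := hB₂.mem_image_Ioo
  obtain ⟨z₁, ⟨hz₁, -⟩, rfl⟩ := hC₁.mem_image_Ioo
  obtain ⟨z₂, ⟨hz₂, hz₂'⟩, rfl⟩ := hC₂.mem_image_Ioo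
  have hABC' : ¬Collinear ℝ {A, B, C} := affineIndependent_iff_not_collinear_set.mp hABC
  have hBCA : ¬Collinear ℝ {B, C, A} := by
    rwa [Set.insert_comm, Set.pair_comm, Set.insert_comm, Set.pair_comm]
  have hCAB : ¬Collinear ℝ {C, A, B} := by rwa [Set.insert_comm, Set.pair_comm]
  have hA := mul_mul_dist_sq_eq_of_angle_lineMap_eq hABC' ht₁.le ht₂'.le hisoA
  have hB := mul_mul_dist_sq_eq_of_angle_lineMap_eq hBCA hs₁.le hs₂'.le hisoB
  have hC := mul_mul_dist_sq_eq_of_angle_lineMap_eq hCAB hz₁.le hz₂'.le hisoC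
  refine conconic_of_carnot hABC (by positivity) ?_
  simp only [dist_comm A C, dist_comm B A, dist_comm C B] at hA hB hC
  have hsides : dist A B ^ 2 * dist B C ^ 2 * dist C A ^ 2 ≠ 0 := by
    simp [ne₁₂_of_not_collinear hABC', ne₁₂_of_not_collinear hBCA, ne₁₂_of_not_collinear hCAB]
  refine mul_right_cancel₀ hsides ?_
  -- the product of the three vertex relations, in which the squared sides telescope
  linear_combination (s₁ * s₂ * dist A B ^ 2 * z₁ * z₂ * dist B C ^ 2) * hA
    + ((1 - t₁) * (1 - t₂) * dist A B ^ 2 * z₁ * z₂ * dist B C ^ 2) * hB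
    + ((1 - t₁) * (1 - t₂) * dist A B ^ 2 * (1 - s₁) * (1 - s₂) * dist B C ^ 2) * hC
end

section
/- Theorem 3 (isotomic cevians): if AA₁, AA₂ and BB₁, BB₂ and CC₁, CC₂ are three pairs of isotomically conjugate cevians of triangle ABC — that is, the midpoint of A₁A₂ equals the midpoint of BC, the midpoint of B₁B₂ equals the midpoint of CA, and the midpoint of C₁C₂ equals the midpoint of AB — then the six cevian feet A₁, A₂, B₁, B₂, C₁, C₂ are conconic. -/
/-!
Let α, β, γ be the unnormalised barycentric coordinates `signedArea X B C`, `signedArea X C A`,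
`signedArea X A B`, which sum to `Δ = signedArea A B C`. The quadratic
`pqrΔ² - qrβγ - rpγα - pqαβ` restricted to `BC` (where `α = 0`, `β + γ = Δ`) vanishes exactly when
`βγ = pΔ²`, i.e. at the points `lineMap B C t` with `t(1 - t) = p`. As `t(1 - t)` is invariant under
the isotomic reflection `t ↦ 1 - t`, the choice `p = t(1 - t)`, `q = u(1 - u)`, `r = v(1 - v)` gives
a quadratic vanishing at all six feet, and it is not the zero quadratic since its value at `A`
is `pqrΔ² ≠ 0`.
-/

open EuclideanGeometry

open AffineMap (lineMap)

section LineMap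

variable {k V P : Type*} [Ring k] [AddCommGroup V] [Module k V] [AddTorsor V P]

theorem mul_one_sub_ne_zero_of_lineMap_ne [NoZeroDivisors k] {p₀ p₁ : P} {t : k}
    (h₀ : lineMap p₀ p₁ t ≠ p₀) (h₁ : lineMap p₀ p₁ t ≠ p₁) :
    t * (1 - t) ≠ 0 := by
  refine mul_ne_zero ?_ (sub_ne_zero.2 ?_) <;> rintro rfl <;> simp_all

theorem eq_lineMap_one_sub_of_midpoint_eq [Invertible (2 : k)] {p₀ p₁ q : P} {t : k}
    (h : midpoint k (lineMap p₀ p₁ t) q = midpoint k p₀ p₁) :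
    q = lineMap p₀ p₁ (1 - t) := by
  rw [midpoint_eq_midpoint_iff_vsub_eq_vsub, AffineMap.lineMap_vsub_left] at h
  rw [AffineMap.lineMap_apply_one_sub, AffineMap.lineMap_apply, eq_vadd_iff_vsub_eq,
    ← neg_vsub_eq_vsub_rev p₁ q, ← h, ← smul_neg, neg_vsub_eq_vsub_rev]

end LineMap

def IsAffineFun (f : Pt → ℝ) : Prop :=
  ∃ d e g : ℝ, ∀ P : Pt, f P = d * P 0 + e * P 1 + g

def IsQuadraticFun (q : Pt → ℝ) : Prop :=
  ∃ a b c d e f : ℝ, ∀ P : Pt,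
    q P = a * (P 0) ^ 2 + b * (P 0) * (P 1) + c * (P 1) ^ 2 + d * (P 0) + e * (P 1) + f

theorem IsQuadraticFun.const (r : ℝ) : IsQuadraticFun fun _ => r :=
  ⟨0, 0, 0, 0, 0, r, fun _ => by ring⟩

theorem IsQuadraticFun.sub {q q' : Pt → ℝ} (hq : IsQuadraticFun q) (hq' : IsQuadraticFun q') :
    IsQuadraticFun fun P => q P - q' P := by
  obtain ⟨a, b, c, d, e, f, hq⟩ := hq
  obtain ⟨a', b', c', d', e', f', hq'⟩ := hq'
  exact ⟨a - a', b - b', c - c', d - d', e - e', f - f', fun P => by simp only [hq, hq']; ring⟩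

theorem IsAffineFun.const_mul_mul {f g : Pt → ℝ} (hf : IsAffineFun f) (hg : IsAffineFun g)
    (r : ℝ) : IsQuadraticFun fun P => r * f P * g P := by
  obtain ⟨d, e, h, hf⟩ := hf
  obtain ⟨d', e', h', hg⟩ := hg
  exact ⟨r * d * d', r * (d * e' + e * d'), r * e * e', r * (d * h' + h * d'),
    r * (e * h' + h * e'), r * h * h', fun P => by simp only [hf, hg]; ring⟩

theorem Conconic.of_isQuadraticFun {s : Set Pt} {q : Pt → ℝ} (hq : IsQuadraticFun q) {P₀ : Pt}
    (hP₀ : q P₀ ≠ 0) (hs : ∀ P ∈ s, q P = 0) : Conconic s := by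
  obtain ⟨a, b, c, d, e, f, hq⟩ := hq
  refine ⟨a, b, c, d, e, f, ?_, fun P hP => hq P ▸ hs P hP⟩
  rintro ⟨⟩
  simp [hq] at hP₀

def signedArea (P Q R : Pt) : ℝ :=
  (Q 0 - P 0) * (R 1 - P 1) - (Q 1 - P 1) * (R 0 - P 0)

theorem isAffineFun_signedArea (Q R : Pt) : IsAffineFun (signedArea · Q R) :=
  ⟨Q 1 - R 1, R 0 - Q 0, Q 0 * R 1 - Q 1 * R 0, fun P => by unfold signedArea; ring⟩

theorem signedArea_rotate (P Q R : Pt) : signedArea Q R P = signedArea P Q R := by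
  unfold signedArea; ring

theorem signedArea_self_left (P Q : Pt) : signedArea P P Q = 0 := by
  unfold signedArea; ring

theorem signedArea_lineMap_left (P Q R S : Pt) (t : ℝ) :
    signedArea (lineMap P Q t) R S = (1 - t) * signedArea P R S + t * signedArea Q R S := by
  simp only [signedArea, AffineMap.lineMap_apply_module, PiLp.add_apply, PiLp.smul_apply,
    smul_eq_mul]
  ring

theorem signedArea_ne_zero_of_affineIndependent {A B C : Pt}
    (h : AffineIndependent ℝ ![A, B, C]) : signedArea A B C ≠ 0 := by
  have hli : LinearIndependent ℝ ![B -ᵥ A, C -ᵥ A] := by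
    rw [affineIndependent_iff_linearIndependent_vsub ℝ _ 0] at h
    convert h.comp (fun i : Fin 2 => ⟨i.succ, i.succ_ne_zero⟩) fun i j hij => by simpa using hij
      using 1
    · funext i; fin_cases i <;> rfl
    · rfl
  rw [LinearIndependent.pair_iff] at hli
  intro hΔ
  -- each coordinate of these combinations is `0` or `±signedArea A B C`
  have comb : ∀ i : Fin 2, (-(C i - A i)) • (B -ᵥ A) + (B i - A i) • (C -ᵥ A) = 0 := by
    intro i; ext j; fin_cases i <;> fin_cases j <;>
      simp only [signedArea, PiLp.add_apply, PiLp.smul_apply, vsub_eq_sub, PiLp.sub_apply,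
        smul_eq_mul, PiLp.zero_apply, Fin.zero_eta, Fin.mk_one] at hΔ ⊢
    all_goals first | linear_combination | linear_combination hΔ | linear_combination -hΔ
  have hBA : B -ᵥ A = 0 := by
    ext j; simpa [sub_eq_zero] using (hli _ _ (comb j)).2
  simpa using hli 1 0 (by rw [hBA]; simp)

def cevianConic (A B C : Pt) (p q r : ℝ) (X : Pt) : ℝ :=
  p * q * r * signedArea A B C ^ 2 - q * r * signedArea X C A * signedArea X A B
    - r * p * signedArea X A B * signedArea X B C - p * q * signedArea X B C * signedArea X C A

theorem isQuadraticFun_cevianConic (A B C : Pt) (p q r : ℝ) :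
    IsQuadraticFun (cevianConic A B C p q r) :=
  (((IsQuadraticFun.const _).sub
    ((isAffineFun_signedArea C A).const_mul_mul (isAffineFun_signedArea A B) _)).sub
      ((isAffineFun_signedArea A B).const_mul_mul (isAffineFun_signedArea B C) _)).sub
        ((isAffineFun_signedArea B C).const_mul_mul (isAffineFun_signedArea C A) _)

theorem cevianConic_rotate (A B C : Pt) (p q r : ℝ) :
    cevianConic B C A q r p = cevianConic A B C p q r := by
  funext X
  rw [cevianConic, cevianConic, signedArea_rotate A B C]
  ring

theorem cevianConic_self (A B C : Pt) (p q r : ℝ) :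
    cevianConic A B C p q r A = p * q * r * signedArea A B C ^ 2 := by
  simp only [cevianConic, signedArea_rotate A A C, signedArea_self_left]
  ring

theorem cevianConic_lineMap (A B C : Pt) (t q r : ℝ) :
    cevianConic A B C (t * (1 - t)) q r (lineMap B C t) = 0 := by
  simp only [cevianConic, signedArea_lineMap_left]
  unfold signedArea
  ring

theorem cevianConic_lineMap_one_sub (A B C : Pt) (t q r : ℝ) :
    cevianConic A B C (t * (1 - t)) q r (lineMap B C (1 - t)) = 0 := by
  have h := cevianConic_lineMap A B C (1 - t) q r
  rwa [sub_sub_cancel, mul_comm] at h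

theorem isotomic_cevian_feet_conconic_general
    (A B C A₁ A₂ B₁ B₂ C₁ C₂ : Pt)
    (hABC : AffineIndependent ℝ ![A, B, C])
    (hA₁ : A₁ ∈ line[ℝ, B, C])
    (hB₁ : B₁ ∈ line[ℝ, C, A])
    (hC₁ : C₁ ∈ line[ℝ, A, B])
    (hne : ∀ P ∈ ({A₁, A₂, B₁, B₂, C₁, C₂} : Set Pt), P ≠ A ∧ P ≠ B ∧ P ≠ C)
    (hisoA : midpoint ℝ A₁ A₂ = midpoint ℝ B C)
    (hisoB : midpoint ℝ B₁ B₂ = midpoint ℝ C A)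
    (hisoC : midpoint ℝ C₁ C₂ = midpoint ℝ A B) :
    Conconic {A₁, A₂, B₁, B₂, C₁, C₂} := by
  obtain ⟨-, hA₁B, hA₁C⟩ := hne A₁ (by simp)
  obtain ⟨hB₁A, -, hB₁C⟩ := hne B₁ (by simp)
  obtain ⟨hC₁A, hC₁B, -⟩ := hne C₁ (by simp)
  obtain ⟨t, rfl⟩ := mem_affineSpan_pair_iff_exists_lineMap_eq.1 hA₁
  obtain ⟨u, rfl⟩ := mem_affineSpan_pair_iff_exists_lineMap_eq.1 hB₁
  obtain ⟨v, rfl⟩ := mem_affineSpan_pair_iff_exists_lineMap_eq.1 hC₁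
  obtain rfl := eq_lineMap_one_sub_of_midpoint_eq hisoA
  obtain rfl := eq_lineMap_one_sub_of_midpoint_eq hisoB
  obtain rfl := eq_lineMap_one_sub_of_midpoint_eq hisoC
  have ht := mul_one_sub_ne_zero_of_lineMap_ne hA₁B hA₁C
  have hu := mul_one_sub_ne_zero_of_lineMap_ne hB₁C hB₁A
  have hv := mul_one_sub_ne_zero_of_lineMap_ne hC₁A hC₁B
  refine Conconic.of_isQuadraticFun
    (isQuadraticFun_cevianConic A B C (t * (1 - t)) (u * (1 - u)) (v * (1 - v))) (P₀ := A) ?_ ?_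
  · rw [cevianConic_self]
    exact mul_ne_zero (mul_ne_zero (mul_ne_zero ht hu) hv)
      (pow_ne_zero 2 (signedArea_ne_zero_of_affineIndependent hABC))
  · rintro P (rfl | rfl | rfl | rfl | rfl | rfl)
    · exact cevianConic_lineMap A B C t _ _
    · exact cevianConic_lineMap_one_sub A B C t _ _
    · rw [← cevianConic_rotate]; exact cevianConic_lineMap B C A u _ _
    · rw [← cevianConic_rotate]; exact cevianConic_lineMap_one_sub B C A u _ _
    · rw [cevianConic_rotate C A B]; exact cevianConic_lineMap C A B v _ _
    · rw [cevianConic_rotate C A B]; exact cevianConic_lineMap_one_sub C A B v _ _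

/-- Theorem 3: the feet of three pairs of isotomically conjugate cevians are conconic. -/
theorem isotomic_cevian_feet_conconic
    (A B C A₁ A₂ B₁ B₂ C₁ C₂ : Pt)
    (hABC : AffineIndependent ℝ ![A, B, C])
    (hA₁ : A₁ ∈ line[ℝ, B, C]) (hA₂ : A₂ ∈ line[ℝ, B, C])
    (hB₁ : B₁ ∈ line[ℝ, C, A]) (hB₂ : B₂ ∈ line[ℝ, C, A])
    (hC₁ : C₁ ∈ line[ℝ, A, B]) (hC₂ : C₂ ∈ line[ℝ, A, B])
    (hne : ∀ P ∈ ({A₁, A₂, B₁, B₂, C₁, C₂} : Set Pt), P ≠ A ∧ P ≠ B ∧ P ≠ C)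
    (hisoA : midpoint ℝ A₁ A₂ = midpoint ℝ B C)
    (hisoB : midpoint ℝ B₁ B₂ = midpoint ℝ C A)
    (hisoC : midpoint ℝ C₁ C₂ = midpoint ℝ A B) :
    Conconic {A₁, A₂, B₁, B₂, C₁, C₂} :=
  isotomic_cevian_feet_conconic_general A B C A₁ A₂ B₁ B₂ C₁ C₂ hABC hA₁ hB₁ hC₁ hne hisoA hisoB
    hisoC
end

section
/- Morley's trisector theorem: for any triangle ABC, the three points U₁, V₁, W₁ of intersection of the adjacent angle trisectors form an equilateral triangle, i.e. dist(U₁,V₁) = dist(V₁,W₁) = dist(W₁,U₁). -/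
open EuclideanGeometry

/-- `P` lies in the interior of the triangle `ABC`: it is a strictly positive convex
combination of the vertices. -/
def InTriangleInterior (A B C P : Pt) : Prop :=
  ∃ a b c : ℝ, 0 < a ∧ 0 < b ∧ 0 < c ∧ a + b + c = 1 ∧ P = a • A + b • B + c • C

/-!
Write `α, β, γ` for the angles of `ABC` and `R` for its circumradius. The sine rule in the
triangle `B U₁ C`, together with `sin 3x = 4 sin (π/3 + x) sin (π/3 - x) sin x`, gives
`BU₁ = 8R sin (α/3) sin (γ/3) sin (π/3 + α/3)`, and symmetrically
`BW₁ = 8R sin (α/3) sin (γ/3) sin (π/3 + γ/3)`. The trisectors `BW₁` and `BU₁` meet at the angle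
`β/3`, and `(π/3 + γ/3) + (π/3 + α/3) + β/3 = π`, so `W₁ B U₁` is similar to the triangle with
these angles inscribed in a circle of diameter `8R sin (α/3) sin (γ/3)`; hence
`W₁U₁ = 8R sin (α/3) sin (β/3) sin (γ/3)`, which is symmetric in the three vertices.
-/

open Real

namespace Real

theorem sin_three_mul_eq_four_mul_sin_mul_sin_mul_sin (x : ℝ) :
    sin (3 * x) = 4 * sin (π / 3 + x) * sin (π / 3 - x) * sin x := by
  have h3 : √3 ^ 2 = 3 := sq_sqrt (by norm_num)
  rw [sin_three_mul, sin_add, sin_sub, sin_pi_div_three, cos_pi_div_three]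
  linear_combination (-(sin x * cos x ^ 2)) * h3 - 3 * sin x * sin_sq_add_cos_sq x

theorem sin_sq_add_sin_sq_sub_two_mul_sin_mul_sin_mul_cos {u v w : ℝ} (h : u + v + w = π) :
    sin u ^ 2 + sin v ^ 2 - 2 * sin u * sin v * cos w = sin w ^ 2 := by
  rw [show w = π - (u + v) by linarith, cos_pi_sub, sin_pi_sub, sin_add, cos_add]
  linear_combination (-(sin u ^ 2)) * sin_sq_add_cos_sq v - sin v ^ 2 * sin_sq_add_cos_sq u

end Real

theorem AffineIndependent.rotate {k V P : Type*} [DivisionRing k] [AddCommGroup V] [Module k V]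
    [AddTorsor V P] {A B C : P} (h : AffineIndependent k ![A, B, C]) :
    AffineIndependent k ![B, C, A] := by
  rw [affineIndependent_iff_not_collinear_set] at h ⊢
  rwa [Set.pair_comm, Set.insert_comm]

namespace EuclideanGeometry

variable {V P : Type*} [NormedAddCommGroup V] [InnerProductSpace ℝ V] [MetricSpace P]
  [NormedAddTorsor V P]

theorem dist_eq_mul_sin_of_angle_eq {p₁ p₂ p₃ : P} {k u v w : ℝ} (hk : 0 ≤ k)
    (hw : 0 ≤ sin w) (hsum : u + v + w = π) (h₁ : dist p₁ p₂ = k * sin u)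
    (h₃ : dist p₃ p₂ = k * sin v) (hangle : ∠ p₁ p₂ p₃ = w) :
    dist p₁ p₃ = k * sin w := by
  refine (pow_left_inj₀ dist_nonneg (mul_nonneg hk hw) two_ne_zero).1 ?_
  have hcos := law_cos p₁ p₂ p₃
  rw [h₁, h₃, hangle] at hcos
  linear_combination hcos + k ^ 2 * sin_sq_add_sin_sq_sub_two_mul_sin_mul_sin_mul_cos hsum

theorem dist_eq_of_angle_eq_of_angle_eq {B C U : P} {R x y z : ℝ} (hx : 0 < x) (hy : 0 < y)
    (hz : 0 < z) (hsum : x + y + z = π / 3) (hBC : dist B C = 2 * R * sin (3 * x))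
    (hB : ∠ U B C = y) (hC : ∠ U C B = z) :
    dist B U = 8 * R * sin x * sin z * sin (π / 3 + x) := by
  have hπ := pi_pos
  have hUB : U ≠ B := by rintro rfl; rw [angle_self_left] at hB; linarith
  have hUC : U ≠ C := by rintro rfl; rw [angle_self_left] at hC; linarith
  have hU : ∠ C U B = π - (y + z) := by
    linarith [angle_add_angle_add_angle_eq_pi C hUB.symm, angle_comm B C U, angle_comm B U C]
  have hsine := law_sin C U B
  rw [hU, sin_pi_sub, show y + z = π / 3 - x by linarith, angle_comm, hC, hBC,
    sin_three_mul_eq_four_mul_sin_mul_sin_mul_sin, dist_comm U B] at hsine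
  have hsin : 0 < sin (π / 3 - x) := sin_pos_of_pos_of_lt_pi (by linarith) (by linarith)
  refine mul_left_cancel₀ hsin.ne' ?_
  linear_combination hsine

theorem dist_eq_of_trisectors {A B C U W : P} {R α β γ : ℝ} (hα : 0 < α) (hβ : 0 < β)
    (hγ : 0 < γ) (hsum : α + β + γ = π) (hR : 0 ≤ R) (hBC : dist B C = 2 * R * sin α)
    (hAB : dist A B = 2 * R * sin γ) (hUB : ∠ U B C = β / 3) (hUC : ∠ U C B = γ / 3)
    (hWA : ∠ W A B = α / 3) (hWB : ∠ W B A = β / 3) (hWBU : ∠ W B U = β / 3) :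
    dist W U = 8 * R * sin (α / 3) * sin (β / 3) * sin (γ / 3) := by
  have hx : 0 < α / 3 := by positivity
  have hy : 0 < β / 3 := by positivity
  have hz : 0 < γ / 3 := by positivity
  have hBU := dist_eq_of_angle_eq_of_angle_eq hx hy hz (by linarith)
    (by rwa [mul_div_cancel₀ α three_ne_zero]) hUB hUC
  have hBW := dist_eq_of_angle_eq_of_angle_eq hz hy hx (by linarith)
    (by rwa [mul_div_cancel₀ γ three_ne_zero, dist_comm]) hWB hWA
  have hsx := sin_nonneg_of_nonneg_of_le_pi hx.le (by linarith)
  have hsy := sin_nonneg_of_nonneg_of_le_pi hy.le (by linarith)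
  have hsz := sin_nonneg_of_nonneg_of_le_pi hz.le (by linarith)
  have hk : 0 ≤ 8 * R * sin (α / 3) * sin (γ / 3) := by positivity
  rw [dist_eq_mul_sin_of_angle_eq hk hsy (u := π / 3 + γ / 3) (v := π / 3 + α / 3)
    (by linarith) (by rw [dist_comm, hBW]; ring) (by rw [dist_comm, hBU]) hWBU]
  ring

section Oriented

variable [Module.Oriented ℝ V (Fin 2)] [Fact (Module.finrank ℝ V = 2)]

theorem oangle_sign_left_eq_of_vsub_eq {A B C X : P} {a c : ℝ} (ha : 0 < a)
    (hX : X -ᵥ B = a • (A -ᵥ B) + c • (C -ᵥ B)) : (∡ X B C).sign = (∡ A B C).sign := by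
  rw [oangle, oangle, hX, Orientation.oangle_sign_smul_add_smul_left, sign_pos ha, one_mul]

theorem oangle_sign_right_eq_of_vsub_eq {A B C X : P} {a c : ℝ} (hc : 0 < c)
    (hX : X -ᵥ B = a • (A -ᵥ B) + c • (C -ᵥ B)) : (∡ A B X).sign = (∡ A B C).sign := by
  rw [oangle, oangle, hX, Orientation.oangle_sign_smul_add_smul_right, sign_pos hc, one_mul]

theorem angle_eq_div_three_of_oangle_sign_eq_one {A B C U W : P} (hABC : (∡ A B C).sign = 1)
    (hW : (∡ A B W).sign = 1) (hU : (∡ U B C).sign = 1) (hWB : ∠ W B A = ∠ A B C / 3)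
    (hUB : ∠ U B C = ∠ A B C / 3) : ∠ W B U = ∠ A B C / 3 := by
  have hAB := left_ne_of_oangle_sign_eq_one hABC
  have hCB := right_ne_of_oangle_sign_eq_one hABC
  have hWne := right_ne_of_oangle_sign_eq_one hW
  have hUne := left_ne_of_oangle_sign_eq_one hU
  have hABW : ∡ A B W = ↑(∠ A B C / 3) := by
    rw [oangle_eq_angle_of_sign_eq_one hW, angle_comm, hWB]
  have hUBC : ∡ U B C = ↑(∠ A B C / 3) := by rw [oangle_eq_angle_of_sign_eq_one hU, hUB]
  have hWBU : ∡ W B U = ∡ A B W := by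
    have hsplit : ∡ A B W + ∡ W B U + ∡ U B C = ∡ A B C := by
      rw [oangle_add hAB hWne hUne, oangle_add hAB hUne hCB]
    rw [oangle_eq_angle_of_sign_eq_one hABC, hABW, hUBC] at hsplit
    have hdiff : ∡ W B U = ↑(∠ A B C) - ↑(∠ A B C / 3) - ↑(∠ A B C / 3) := by
      rw [← hsplit]; abel
    rw [hdiff, hABW, ← Real.Angle.coe_sub, ← Real.Angle.coe_sub]
    ring_nf
  rw [angle_eq_abs_oangle_toReal hWne hUne, hWBU, ← angle_eq_abs_oangle_toReal hAB hWne,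
    angle_comm, hWB]

theorem angle_eq_div_three_of_oangle_sign_eq {A B C U W : P} (hABC : (∡ A B C).sign ≠ 0)
    (hW : (∡ A B W).sign = (∡ A B C).sign) (hU : (∡ U B C).sign = (∡ A B C).sign)
    (hWB : ∠ W B A = ∠ A B C / 3) (hUB : ∠ U B C = ∠ A B C / 3) : ∠ W B U = ∠ A B C / 3 := by
  rcases (∡ A B C).sign.trichotomy with hneg | hzero | hpos
  · -- Reversing the orientation exchanges the roles of `A, W` and `C, U`.
    have hsign : ∀ X Y : P, (∡ X B Y).sign = -1 → (∡ Y B X).sign = 1 := fun X Y h => by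
      rw [← oangle_swap₁₃_sign, h, neg_neg]
    rw [angle_comm W, angle_comm A B C]
    rw [angle_comm A B C] at hWB hUB
    exact angle_eq_div_three_of_oangle_sign_eq_one (hsign _ _ hneg) (hsign _ _ (hU.trans hneg))
      (hsign _ _ (hW.trans hneg)) hUB hWB
  · exact absurd hzero hABC
  · exact angle_eq_div_three_of_oangle_sign_eq_one hpos (hW.trans hpos) (hU.trans hpos) hWB hUB

end Oriented

theorem angle_pos_of_affineIndependent {A B C : P} (h : AffineIndependent ℝ ![A, B, C]) :
    0 < ∠ A B C :=
  angle_pos_of_not_collinear (affineIndependent_iff_not_collinear_set.1 h)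

theorem angle_add_angle_add_angle_eq_pi_of_affineIndependent {A B C : P}
    (h : AffineIndependent ℝ ![A, B, C]) : ∠ B A C + ∠ A B C + ∠ B C A = π := by
  have hBA : B ≠ A := h.injective.ne (by decide : (1 : Fin 3) ≠ 0)
  rw [← angle_add_angle_add_angle_eq_pi C hBA, angle_comm C A B]
  ring

theorem exists_dist_eq_two_mul_mul_sin_angle {A B C : P} (h : AffineIndependent ℝ ![A, B, C]) :
    ∃ R, 0 ≤ R ∧ dist B C = 2 * R * sin (∠ B A C) ∧ dist C A = 2 * R * sin (∠ A B C) ∧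
      dist A B = 2 * R * sin (∠ B C A) := by
  let t : Affine.Triangle ℝ P := ⟨![A, B, C], h⟩
  have hR := t.circumradius_pos
  -- `0 < t.circumradius` rules out the junk value `d / 0 = 0`.
  have hsin : ∀ {d s : ℝ}, d / s = 2 * t.circumradius → d = 2 * t.circumradius * s := by
    intro d s hds
    have hs : s ≠ 0 := by rintro rfl; rw [div_zero] at hds; linarith
    rwa [div_eq_iff hs] at hds
  refine ⟨t.circumradius, hR.le, hsin ?_, hsin ?_, hsin ?_⟩
  · exact t.dist_div_sin_angle_eq_two_mul_circumradius (i₁ := 1) (i₂ := 0) (i₃ := 2)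
      (by decide) (by decide) (by decide)
  · rw [dist_comm]
    exact t.dist_div_sin_angle_eq_two_mul_circumradius (i₁ := 0) (i₂ := 1) (i₃ := 2)
      (by decide) (by decide) (by decide)
  · rw [dist_comm]
    exact t.dist_div_sin_angle_eq_two_mul_circumradius (i₁ := 1) (i₂ := 2) (i₃ := 0)
      (by decide) (by decide) (by decide)

end EuclideanGeometry

namespace InTriangleInterior

variable {A B C X : Pt}

theorem rotate (h : InTriangleInterior A B C X) : InTriangleInterior B C A X := by
  obtain ⟨a, b, c, ha, hb, hc, habc, hX⟩ := h
  exact ⟨b, c, a, hb, hc, ha, by linarith, by rw [hX]; module⟩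

theorem exists_vsub_eq (h : InTriangleInterior A B C X) :
    ∃ a c : ℝ, 0 < a ∧ 0 < c ∧ X -ᵥ B = a • (A -ᵥ B) + c • (C -ᵥ B) := by
  obtain ⟨a, b, c, ha, -, hc, habc, hX⟩ := h
  refine ⟨a, c, ha, hc, ?_⟩
  simp only [vsub_eq_sub, hX, show b = 1 - a - c by linarith]
  module

end InTriangleInterior

theorem angle_eq_div_three_of_inTriangleInterior {A B C U W : Pt}
    (hABC : AffineIndependent ℝ ![A, B, C]) (hW : InTriangleInterior A B C W)
    (hU : InTriangleInterior A B C U) (hWB : ∠ W B A = ∠ A B C / 3)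
    (hUB : ∠ U B C = ∠ A B C / 3) : ∠ W B U = ∠ A B C / 3 := by
  -- Any orientation of the plane will do.
  let _ : Module.Oriented ℝ Pt (Fin 2) :=
    ⟨(EuclideanSpace.basisFun (Fin 2) ℝ).toBasis.orientation⟩
  have : Fact (Module.finrank ℝ Pt = 2) := ⟨finrank_euclideanSpace_fin⟩
  obtain ⟨_, c, -, hc, hWc⟩ := hW.exists_vsub_eq
  obtain ⟨a, _, ha, -, hUa⟩ := hU.exists_vsub_eq
  refine angle_eq_div_three_of_oangle_sign_eq ?_ (oangle_sign_right_eq_of_vsub_eq hc hWc)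
    (oangle_sign_left_eq_of_vsub_eq ha hUa) hWB hUB
  exact Real.Angle.sign_ne_zero_iff.2 (oangle_ne_zero_and_ne_pi_iff_affineIndependent.2 hABC)

/-- Morley's trisector theorem: the three intersection points of adjacent angle
trisectors form an equilateral triangle. -/
theorem morley_trisector
    (A B C U₁ V₁ W₁ : Pt)
    (hABC : AffineIndependent ℝ ![A, B, C])
    (hU : InTriangleInterior A B C U₁)
    (hUB : ∠ U₁ B C = ∠ A B C / 3) (hUC : ∠ U₁ C B = ∠ B C A / 3)
    (hV : InTriangleInterior A B C V₁)
    (hVC : ∠ V₁ C A = ∠ B C A / 3) (hVA : ∠ V₁ A C = ∠ B A C / 3)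
    (hW : InTriangleInterior A B C W₁)
    (hWA : ∠ W₁ A B = ∠ B A C / 3) (hWB : ∠ W₁ B A = ∠ A B C / 3) :
    dist U₁ V₁ = dist V₁ W₁ ∧ dist V₁ W₁ = dist W₁ U₁ := by
  obtain ⟨R, hR, hBC, hCA, hAB⟩ := exists_dist_eq_two_mul_mul_sin_angle hABC
  have hsum := angle_add_angle_add_angle_eq_pi_of_affineIndependent hABC
  have hβ := angle_pos_of_affineIndependent hABC
  have hγ := angle_pos_of_affineIndependent hABC.rotate
  have hα := angle_comm C A B ▸ angle_pos_of_affineIndependent hABC.rotate.rotate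
  have hB := angle_eq_div_three_of_inTriangleInterior hABC hW hU hWB hUB
  have hC := angle_eq_div_three_of_inTriangleInterior hABC.rotate hU.rotate hV.rotate hUC hVC
  have hA := angle_comm C A B ▸ angle_eq_div_three_of_inTriangleInterior hABC.rotate.rotate
    hV.rotate.rotate hW.rotate.rotate (angle_comm B A C ▸ hVA) (angle_comm B A C ▸ hWA)
  have hWU := dist_eq_of_trisectors hα hβ hγ hsum hR hBC hAB hUB hUC hWA hWB hB
  have hUV := dist_eq_of_trisectors hβ hγ hα (by linarith) hR hCA hBC hVC hVA hUB hUC hC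
  have hVW := dist_eq_of_trisectors hγ hα hβ (by linarith) hR hAB hCA hWA hWB hVC hVA hA
  constructor
  · rw [hUV, hVW]; ring
  · rw [hVW, hWU]; ring
end

section
/- Second Morley center: for any triangle ABC with Morley vertices U₁, V₁, W₁ (intersections of adjacent angle trisectors), the three lines AU₁, BV₁, CW₁ are concurrent, i.e. there exists a point lying on all three lines. -/
open EuclideanGeometry

/-!
At a vertex `Y` of a triangle `XYZ`, a point `P` with `P - Y = p • (X - Y) + r • (Z - Y)`
satisfies `p · sin ∠XYP · |XY| = r · sin ∠ZYP · |ZY|` (both sides times `|YP|` are `p r` times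
twice the area of `XYZ`). For the first Morley vertex `U₁ = a A + b B + c C` we have
`∠ABU₁ = 2β/3` and `∠CBU₁ = β/3`, so `sin (2t) = 2 sin t cos t` turns this at `B` and at `C`
into `b · |AB| cos (β/3) = c · |AC| cos (γ/3)`. Hence the point with barycentric coordinates
`|BC| sec (α/3) : |CA| sec (β/3) : |AB| sec (γ/3)` lies on `AU₁`, and by cyclic symmetry on
`BV₁` and `CW₁`.
-/

open Real RealInnerProductSpace

namespace InnerProductGeometry

variable {V : Type*} [NormedAddCommGroup V] [InnerProductSpace ℝ V]

theorem sin_angle_smul_add_smul_mul_norm_mul_norm (x y : V) (a b : ℝ) :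
    sin (angle x (a • x + b • y)) * (‖x‖ * ‖a • x + b • y‖)
      = |b| * (sin (angle x y) * (‖x‖ * ‖y‖)) := by
  have gram : ⟪x, x⟫ * ⟪a • x + b • y, a • x + b • y⟫
      - ⟪x, a • x + b • y⟫ * ⟪x, a • x + b • y⟫
      = b ^ 2 * (⟪x, x⟫ * ⟪y, y⟫ - ⟪x, y⟫ * ⟪x, y⟫) := by
    simp only [inner_add_left, inner_add_right, inner_smul_left, inner_smul_right,
      real_inner_comm x y, RCLike.conj_to_real]
    ring
  rw [sin_angle_mul_norm_mul_norm, sin_angle_mul_norm_mul_norm, gram,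
    Real.sqrt_mul (sq_nonneg b), Real.sqrt_sq_eq_abs]

theorem abs_mul_sin_angle_mul_norm_eq (x y : V) (a b : ℝ) :
    |a| * sin (angle x (a • x + b • y)) * ‖x‖ = |b| * sin (angle y (a • x + b • y)) * ‖y‖ := by
  rcases eq_or_ne (a • x + b • y) 0 with hw | hw
  · have : ‖a • x‖ = ‖b • y‖ := by rw [eq_neg_of_add_eq_zero_left hw, norm_neg]
    simp only [hw, angle_zero_right, sin_pi_div_two, mul_one]
    simpa [norm_smul] using this
  refine mul_right_cancel₀ (norm_ne_zero_iff.mpr hw) ?_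
  have hx := sin_angle_smul_add_smul_mul_norm_mul_norm x y a b
  have hy := sin_angle_smul_add_smul_mul_norm_mul_norm y x b a
  rw [add_comm (b • y), angle_comm y x] at hy
  linear_combination |a| * hx - |b| * hy

end InnerProductGeometry

theorem inv_smul_add_smul_add_smul_mem_affineSpan_pair {k V : Type*} [Field k] [AddCommGroup V]
    [Module k V] {A B C : V} {a b c x y z : k} (hb : b ≠ 0) (habc : a + b + c = 1)
    (hxyz : x + y + z ≠ 0) (h : y * c = z * b) :
    (x + y + z)⁻¹ • (x • A + y • B + z • C) ∈ line[k, A, a • A + b • B + c • C] := by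
  convert AffineMap.lineMap_mem_affineSpan_pair (y / (b * (x + y + z))) A
    (a • A + b • B + c • C) using 1
  rw [AffineMap.lineMap_apply_module, show a = 1 - b - c by linear_combination habc]
  match_scalars <;> field_simp
  · linear_combination h
  · linear_combination -h

namespace EuclideanGeometry

variable {V : Type*} [NormedAddCommGroup V] [InnerProductSpace ℝ V]

theorem abs_mul_sin_angle_mul_dist_eq {X Y Z P : V} {p r : ℝ}
    (hP : P - Y = p • (X - Y) + r • (Z - Y)) :
    |p| * sin (∠ X Y P) * dist X Y = |r| * sin (∠ Z Y P) * dist Z Y := by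
  simp only [angle, vsub_eq_sub, dist_eq_norm, hP]
  exact InnerProductGeometry.abs_mul_sin_angle_mul_norm_eq _ _ p r

theorem angle_add_angle_eq_of_sub_eq_smul_add_smul {X Y Z P : V} {p r : ℝ}
    (hXY : X ≠ Y) (hZY : Z ≠ Y) (hp : 0 < p) (hr : 0 < r)
    (hP : P - Y = p • (X - Y) + r • (Z - Y)) :
    ∠ X Y P + ∠ P Y Z = ∠ X Y Z := by
  set M := AffineMap.lineMap X Z (r / (p + r)) with hM_def
  have hM : (p + r) • (M - Y) = P - Y := by
    rw [hP, hM_def, AffineMap.lineMap_apply_module]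
    match_scalars <;> field_simp <;> ring
  have hXMZ : Wbtw ℝ X M Z :=
    ⟨r / (p + r), ⟨by positivity, div_le_one_of_le₀ (by linarith) (by positivity)⟩, rfl⟩
  rw [angle_smul_right_of_pos X (by positivity) hM, angle_smul_left_of_pos Z (by positivity) hM]
  exact angle_add_of_ne_of_ne hXY.symm hZY.symm hXMZ

theorem cos_angle_div_three_pos (X Y Z : V) : 0 < cos (∠ X Y Z / 3) :=
  cos_pos_of_mem_Ioo ⟨by linarith [angle_nonneg X Y Z, pi_pos],
    by linarith [angle_le_pi X Y Z, pi_pos]⟩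

theorem two_mul_cos_mul_dist_eq_of_angle_eq_div_three {X Y Z P : V} {p r : ℝ}
    (hXYZ : ¬Collinear ℝ {X, Y, Z}) (hp : 0 < p) (hr : 0 < r)
    (hP : P - Y = p • (X - Y) + r • (Z - Y)) (hY : ∠ P Y Z = ∠ X Y Z / 3) :
    p * (2 * cos (∠ X Y Z / 3)) * dist X Y = r * dist Z Y := by
  have hsplit := angle_add_angle_eq_of_sub_eq_smul_add_smul (ne₁₂_of_not_collinear hXYZ)
    (ne₂₃_of_not_collinear hXYZ).symm hp hr hP
  have hXYP : ∠ X Y P = 2 * (∠ X Y Z / 3) := by linarith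
  have hsin : 0 < sin (∠ X Y Z / 3) :=
    sin_pos_of_pos_of_lt_pi (by linarith [angle_pos_of_not_collinear hXYZ])
      (by linarith [angle_le_pi X Y Z, pi_pos])
  have hratio := abs_mul_sin_angle_mul_dist_eq hP
  rw [abs_of_pos hp, abs_of_pos hr, hXYP, sin_two_mul, angle_comm Z Y P, hY] at hratio
  exact mul_right_cancel₀ hsin.ne' (by linear_combination hratio)

theorem mul_dist_mul_cos_eq_of_trisectors {X Y Z P : V} {p q r : ℝ}
    (hXYZ : ¬Collinear ℝ {X, Y, Z}) (hp : 0 < p) (hq : 0 < q) (hr : 0 < r)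
    (hpqr : p + q + r = 1) (hP : P = p • X + q • Y + r • Z)
    (hY : ∠ P Y Z = ∠ X Y Z / 3) (hZ : ∠ P Z Y = ∠ Y Z X / 3) :
    q * dist X Y * cos (∠ X Y Z / 3) = r * dist X Z * cos (∠ Y Z X / 3) := by
  have hXZY : ¬Collinear ℝ {X, Z, Y} := by rwa [Set.pair_comm]
  have atY := two_mul_cos_mul_dist_eq_of_angle_eq_div_three hXYZ hp hr
    (by rw [hP, show q = 1 - p - r by linarith]; module) hY
  have atZ := two_mul_cos_mul_dist_eq_of_angle_eq_div_three (P := P) hXZY hp hq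
    (by rw [hP, show r = 1 - p - q by linarith]; module) (by rw [hZ, angle_comm Y Z X])
  rw [dist_comm Z Y] at atY
  rw [angle_comm X Z Y] at atZ
  refine mul_left_cancel₀ (mul_pos two_pos hp).ne' ?_
  linear_combination q * atY - r * atZ

noncomputable def secondMorleyWeight (A B C : V) : ℝ := dist B C / cos (∠ C A B / 3)

noncomputable def secondMorleyCenter (A B C : V) : V :=
  (secondMorleyWeight A B C + secondMorleyWeight B C A + secondMorleyWeight C A B)⁻¹ •
    (secondMorleyWeight A B C • A + secondMorleyWeight B C A • B + secondMorleyWeight C A B • C)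

theorem secondMorleyCenter_rotate (A B C : V) :
    secondMorleyCenter B C A = secondMorleyCenter A B C := by
  rw [secondMorleyCenter, secondMorleyCenter, add_rotate (secondMorleyWeight A B C),
    add_rotate (secondMorleyWeight A B C • A)]

theorem secondMorleyWeight_pos {A B C : V} (hBC : B ≠ C) : 0 < secondMorleyWeight A B C :=
  div_pos (dist_pos.mpr hBC) (cos_angle_div_three_pos C A B)

theorem secondMorleyCenter_mem_line_of_trisectors {X Y Z P : V} {p q r : ℝ}
    (hXYZ : ¬Collinear ℝ {X, Y, Z}) (hp : 0 < p) (hq : 0 < q) (hr : 0 < r)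
    (hpqr : p + q + r = 1) (hP : P = p • X + q • Y + r • Z)
    (hY : ∠ P Y Z = ∠ X Y Z / 3) (hZ : ∠ P Z Y = ∠ Y Z X / 3) :
    secondMorleyCenter X Y Z ∈ line[ℝ, X, P] := by
  have hrel := mul_dist_mul_cos_eq_of_trisectors hXYZ hp hq hr hpqr hP hY hZ
  have hβ := cos_angle_div_three_pos X Y Z
  have hγ := cos_angle_div_three_pos Y Z X
  rw [hP]
  refine inv_smul_add_smul_add_smul_mem_affineSpan_pair hq.ne' hpqr ?_ ?_
  · have := secondMorleyWeight_pos (A := X) (ne₂₃_of_not_collinear hXYZ)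
    have := secondMorleyWeight_pos (A := Y) (ne₁₃_of_not_collinear hXYZ).symm
    have := secondMorleyWeight_pos (A := Z) (ne₁₂_of_not_collinear hXYZ)
    positivity
  · unfold secondMorleyWeight
    rw [dist_comm Z X, div_mul_eq_mul_div, div_mul_eq_mul_div, div_eq_div_iff hβ.ne' hγ.ne']
    linear_combination -hrel

end EuclideanGeometry

/-- Second Morley center: the lines from the vertices to the opposite Morley
vertices are concurrent. -/
theorem second_morley_center
    (A B C U₁ V₁ W₁ : Pt)
    (hABC : AffineIndependent ℝ ![A, B, C])
    (hU : InTriangleInterior A B C U₁)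
    (hUB : ∠ U₁ B C = ∠ A B C / 3) (hUC : ∠ U₁ C B = ∠ B C A / 3)
    (hV : InTriangleInterior A B C V₁)
    (hVC : ∠ V₁ C A = ∠ B C A / 3) (hVA : ∠ V₁ A C = ∠ B A C / 3)
    (hW : InTriangleInterior A B C W₁)
    (hWA : ∠ W₁ A B = ∠ B A C / 3) (hWB : ∠ W₁ B A = ∠ A B C / 3) :
    ∃ P : Pt, P ∈ line[ℝ, A, U₁] ∧ P ∈ line[ℝ, B, V₁] ∧ P ∈ line[ℝ, C, W₁] := by
  have hABC_nc : ¬Collinear ℝ {A, B, C} := affineIndependent_iff_not_collinear_set.mp hABC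
  have hBCA : ¬Collinear ℝ {B, C, A} := by rwa [Set.pair_comm, Set.insert_comm]
  have hCAB : ¬Collinear ℝ {C, A, B} := by rwa [Set.insert_comm, Set.pair_comm]
  obtain ⟨a₁, b₁, c₁, ha₁, hb₁, hc₁, hs₁, rfl⟩ := hU
  obtain ⟨a₂, b₂, c₂, ha₂, hb₂, hc₂, hs₂, rfl⟩ := hV
  obtain ⟨a₃, b₃, c₃, ha₃, hb₃, hc₃, hs₃, rfl⟩ := hW
  rw [← angle_comm C A B] at hVA hWA
  refine ⟨secondMorleyCenter A B C, ?_, ?_, ?_⟩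
  · exact secondMorleyCenter_mem_line_of_trisectors hABC_nc ha₁ hb₁ hc₁ hs₁ rfl hUB hUC
  · rw [← secondMorleyCenter_rotate]
    exact secondMorleyCenter_mem_line_of_trisectors hBCA hb₂ hc₂ ha₂ (by linarith)
      (by abel) hVC hVA
  · rw [← secondMorleyCenter_rotate, ← secondMorleyCenter_rotate]
    exact secondMorleyCenter_mem_line_of_trisectors hCAB hc₃ ha₃ hb₃ (by linarith)
      (by abel) hWA hWB
end
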